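/- arXiv:1705.07623 — 5 statements merged into one kernel-verified Lean document; each statement's English description precedes it below -/
import Mathlib

section
/- Let q^m ≡ 3 (mod 4) be an odd prime power and N an odd positive integer dividing (q^m−1)/(q−1). Let χ'_N be a multiplicative character of order N of F_{q^m} and let χ_N be its lift to F_{q^{2m}} (i.e., χ_N(α) = χ'_N(Norm_{F_{q^{2m}}/F_{q^m}}(α))), and let χ_4 be a multiplicative character of order 4 of F_{q^{2m}}. Then G_{q^{2m}}(χ_4 χ_N) = G_{q^{2m}}(χ_4³ χ_N), and moreover G_{q^{2m}}(χ_4 χ_N) = ρ · q^m · G_{q^m}(η χ'_N²) / G_{q^m}(η), where η is the quadratic character of F_{q^m}, and ρ = −1 if q^m ≡ 3 (mod 8) and ρ = 1 if q^m ≡ 7 (mod 8). -/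
open scoped Classical

/-- The canonical additive character of a finite field `F` of characteristic `p`:
`ψ(x) = exp(2πi·Tr_{F/F_p}(x)/p)`. -/
noncomputable def canonPsi (p : ℕ) (F : Type) [Field F] [Algebra (ZMod p) F] : F → ℂ :=
  fun x => Complex.exp (2 * Real.pi * Complex.I *
    ((Algebra.trace (ZMod p) F x).val : ℂ) / (p : ℂ))

/-- The Gauss sum `G_Q(χ) = Σ_{x ∈ F_Q^*} χ(x)ψ(x)`. -/
noncomputable def gaussSumF {F : Type} [Field F] [Fintype F]
    (χ : MulChar F ℂ) (ψ : F → ℂ) : ℂ :=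
  ∑ x ∈ Finset.univ.filter (fun x : F => x ≠ 0), χ x * ψ x

/-!
Let `Q = q^m`, `K = 𝔽_Q ⊆ L = 𝔽_{Q²}` and `ν = η χ'_N²`. Since `Q ≡ 3 (mod 4)`, the Frobenius
`x ↦ x^Q` raises `χ₄` to the third power and fixes `χ_N` and `ψ_L`, which gives the first
identity. As `χ₄²` is the quadratic character of `L`, adding the two Gauss sums counts square
roots: `2 G(χ₄χ_N) = ∑_γ (χ₄χ_N)(γ²) ψ_L(γ²) = ∑_γ ν(N γ) ψ_K(Tr γ²)`. Writing `γ = a + b i`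
with `i² = -1` turns this into `∑_{a,b} ν(a² + b²) ψ_K(2(a² - b²))`; expanding squares once
more gives a double sum over `x, y ∈ K` weighted by `(1 + η x)(1 + η y)`. The involution
`(x, y) ↦ (-y, -x)` cancels the unweighted and the doubly weighted parts because
`η(-1) = ν(-1) = -1`, and each remaining part factors as `G(η) G(ν)`. Finally `G(η)² = -Q`
and `ν(2) = η(2) = ρ`: since the order of `χ'_N` divides `(Q - 1)/(q - 1)`, `χ'_N` is trivial
on `𝔽_q^×`, which contains `2`.
-/

open Finset

noncomputable def canonAddChar (p : ℕ) [Fact p.Prime] (F : Type*) [Field F]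
    [Algebra (ZMod p) F] : AddChar F ℂ :=
  ZMod.stdAddChar.compAddMonoidHom (Algebra.trace (ZMod p) F).toAddMonoidHom

section CanonAddChar

variable {p : ℕ} [Fact p.Prime]

theorem coe_canonAddChar (F : Type) [Field F] [Algebra (ZMod p) F] :
    ⇑(canonAddChar p F) = canonPsi p F := by
  ext x
  simp [canonAddChar, canonPsi, ZMod.stdAddChar_apply, ZMod.toCircle_apply]

theorem gaussSumF_canonPsi {F : Type} [Field F] [Fintype F] [Algebra (ZMod p) F]
    (χ : MulChar F ℂ) : gaussSumF χ (canonPsi p F) = gaussSum χ (canonAddChar p F) := by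
  rw [gaussSumF, gaussSum, ← coe_canonAddChar]
  exact sum_filter_of_ne fun x _ hx ↦ by
    rintro rfl
    exact hx (by rw [MulChar.map_zero, zero_mul])

variable {F : Type*} [Field F] [Finite F] [Algebra (ZMod p) F]

theorem canonAddChar_isPrimitive : (canonAddChar p F).IsPrimitive := by
  refine AddChar.IsPrimitive.of_ne_one fun h ↦ ?_
  have : Module.Finite (ZMod p) F := Module.Finite.of_finite
  obtain ⟨x, hx⟩ := Algebra.trace_surjective (ZMod p) F 1
  have h1 : ZMod.stdAddChar (1 : ZMod p) = ZMod.stdAddChar (0 : ZMod p) := by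
    rw [← hx, AddChar.map_zero_eq_one]
    exact DFunLike.congr_fun h x
  exact one_ne_zero (ZMod.injective_stdAddChar h1)

theorem canonAddChar_trace {K : Type*} [Field K] [Algebra (ZMod p) K] [Algebra K F]
    [IsScalarTower (ZMod p) K F] (x : F) :
    canonAddChar p K (Algebra.trace K F x) = canonAddChar p F x := by
  have : Finite K := Finite.of_injective _ (algebraMap K F).injective
  have : Module.Finite K F := Module.Finite.of_finite
  have : Module.Finite (ZMod p) K := Module.Finite.of_finite
  simp [canonAddChar, Algebra.trace_trace]

end CanonAddChar

namespace MulChar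

theorem apply_neg_of_apply_neg_one {R R' : Type*} [CommRing R] [CommRing R']
    {χ : MulChar R R'} (hχ : χ (-1) = -1) (x : R) : χ (-x) = -χ x := by
  rw [neg_eq_neg_one_mul, map_mul, hχ, neg_one_mul]

theorem isQuadratic_of_orderOf_eq_two {M R : Type*} [CommMonoid M] [CommRing R] [IsDomain R]
    {χ : MulChar M R} (hχ : orderOf χ = 2) : χ.IsQuadratic :=
  isQuadratic_iff_sq_eq_one.mpr (hχ ▸ pow_orderOf_eq_one χ)

theorem eq_of_isQuadratic_of_ne_one {F R : Type*} [Field F] [Finite F] [CommRing R]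
    [Nontrivial R] {χ₁ χ₂ : MulChar F R} (h₁ : χ₁.IsQuadratic) (h₂ : χ₂.IsQuadratic)
    (h₁' : χ₁ ≠ 1) (h₂' : χ₂ ≠ 1) : χ₁ = χ₂ := by
  obtain ⟨g, hg⟩ := IsCyclic.exists_generator (α := Fˣ)
  have apply_gen : ∀ χ : MulChar F R, χ.IsQuadratic → χ ≠ 1 → χ g = -1 := fun χ hχ hχ1 ↦ by
    rcases hχ g with h | h | h
    · exact absurd h (g.isUnit.map χ).ne_zero
    · exact absurd ((eq_iff hg χ 1).mpr (by rw [h, one_apply_coe])) hχ1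
    · exact h
  exact (eq_iff hg χ₁ χ₂).mpr ((apply_gen χ₁ h₁ h₁').trans (apply_gen χ₂ h₂ h₂').symm)

variable {F : Type*} [Field F] [Fintype F]

theorem apply_eq_one_of_pow_eq_one {R : Type*} [CommMonoidWithZero R] (χ : MulChar F R)
    {M d : ℕ} (hMd : M * d = Fintype.card F - 1) (hχ : χ ^ M = 1) {x : F} (hx : x ^ d = 1) :
    χ x = 1 := by
  have hd : d ≠ 0 := by
    rintro rfl
    have := Fintype.one_lt_card (α := F)
    omega
  have hx0 : x ≠ 0 := by rintro rfl; simp [hd] at hx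
  obtain ⟨g, hg⟩ := IsCyclic.exists_monoid_generator (α := Fˣ)
  obtain ⟨k, hk : g ^ k = Units.mk0 x hx0⟩ := hg (Units.mk0 x hx0)
  have hMk : M ∣ k := by
    have hord : orderOf g = M * d := by
      rw [orderOf_eq_card_of_forall_mem_powers hg, Nat.card_eq_fintype_card, Fintype.card_units,
        hMd]
    have : g ^ (k * d) = 1 := by
      rw [pow_mul, hk, Units.ext_iff, Units.val_pow_eq_pow_val, Units.val_mk0, hx, Units.val_one]
    exact Nat.dvd_of_mul_dvd_mul_right (Nat.pos_of_ne_zero hd)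
      (hord ▸ orderOf_dvd_of_pow_eq_one this)
  obtain ⟨j, rfl⟩ := hMk
  rw [show x = ((g ^ (M * j) : Fˣ) : F) by rw [hk, Units.val_mk0], Units.val_pow_eq_pow_val,
    map_pow, pow_mul, ← pow_apply_coe, hχ, one_apply_coe, one_pow]

theorem apply_natCast_eq_one {p : ℕ} [Fact p.Prime] [Algebra (ZMod p) F] {R : Type*}
    [CommMonoidWithZero R] (χ : MulChar F R) {s : ℕ} (hs : p ^ s - 1 ∣ Fintype.card F - 1)
    (hχ : χ ^ ((Fintype.card F - 1) / (p ^ s - 1)) = 1) {n : ℕ} (hn : (n : F) ≠ 0) :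
    χ n = 1 := by
  have hnp : (n : ZMod p) ≠ 0 := fun h ↦ hn (by rw [← map_natCast (algebraMap (ZMod p) F), h,
    map_zero])
  refine χ.apply_eq_one_of_pow_eq_one (Nat.div_mul_cancel hs) hχ ?_
  obtain ⟨k, hk⟩ := Nat.sub_one_dvd_pow_sub_one p s
  rw [← map_natCast (algebraMap (ZMod p) F), ← map_pow, hk, pow_mul,
    ZMod.pow_card_sub_one_eq_one hnp, one_pow, map_one]

variable {η : MulChar F ℂ}

theorem ringChar_ne_two_of_orderOf_eq_two (hη : orderOf η = 2) : ringChar F ≠ 2 := by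
  have h := hη ▸ orderOf_dvd_card_sub_one F η
  rw [Ne, FiniteField.even_card_iff_char_two]
  have := Fintype.one_lt_card (α := F)
  omega

theorem apply_eq_quadraticChar_of_orderOf_eq_two (hη : orderOf η = 2) (x : F) :
    η x = quadraticChar F x := by
  have hF := ringChar_ne_two_of_orderOf_eq_two hη
  suffices η = (quadraticChar F).ringHomComp (Int.castRingHom ℂ) by rw [this]; rfl
  refine eq_of_isQuadratic_of_ne_one (isQuadratic_of_orderOf_eq_two hη)
    ((quadraticChar_isQuadratic F).comp _) (fun h ↦ by simp [h] at hη) fun h ↦ ?_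
  obtain ⟨a, ha⟩ := quadraticChar_exists_neg_one' hF
  have := congrArg (· (a : F)) h
  norm_num [ha] at this

theorem apply_neg_one_of_orderOf_eq_two (hη : orderOf η = 2) (hF : Fintype.card F % 4 = 3) :
    η (-1) = -1 := by
  rw [apply_eq_quadraticChar_of_orderOf_eq_two hη,
    quadraticChar_neg_one (ringChar_ne_two_of_orderOf_eq_two hη), ZMod.χ₄_nat_three_mod_four hF]
  norm_num

theorem gaussSum_sq_of_orderOf_eq_two (hη : orderOf η = 2) {ψ : AddChar F ℂ}
    (hψ : ψ.IsPrimitive) : gaussSum η ψ ^ 2 = η (-1) * Fintype.card F :=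
  gaussSum_sq (fun h ↦ by simp [h] at hη) (isQuadratic_of_orderOf_eq_two hη) hψ

theorem apply_two_of_orderOf_eq_two (hη : orderOf η = 2) (hF : Fintype.card F % 4 = 3) :
    η 2 = if Fintype.card F % 8 = 3 then -1 else 1 := by
  rw [apply_eq_quadraticChar_of_orderOf_eq_two hη,
    quadraticChar_two (ringChar_ne_two_of_orderOf_eq_two hη), ZMod.χ₈_nat_eq_if_mod_eight]
  have hodd : Fintype.card F % 2 = 1 := by omega
  rcases (by omega : Fintype.card F % 8 = 3 ∨ Fintype.card F % 8 = 7) with h | h <;>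
    simp [h, hodd]

end MulChar

section CharacterSums

variable {F : Type*} [Field F] [Fintype F]

theorem sum_apply_sq_eq_sum_one_add_mul {η : MulChar F ℂ} (hη : orderOf η = 2) (f : F → ℂ) :
    ∑ a, f (a ^ 2) = ∑ x, (1 + η x) * f x := by
  rw [← sum_fiberwise univ (· ^ 2) fun a ↦ f (a ^ 2)]
  refine sum_congr rfl fun x _ ↦ ?_
  rw [sum_congr rfl fun a ha ↦ by rw [(mem_filter.mp ha).2], sum_const, nsmul_eq_mul,
    MulChar.apply_eq_quadraticChar_of_orderOf_eq_two hη, add_comm (1 : ℂ)]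
  have h := quadraticChar_card_sqrts (MulChar.ringChar_ne_two_of_orderOf_eq_two hη) x
  rw [Set.toFinset_ofPred] at h
  congr 1
  exact_mod_cast h

theorem gaussSum_add_gaussSum_mul_eq_sum_sq {η : MulChar F ℂ} (hη : orderOf η = 2)
    (χ : MulChar F ℂ) (ψ : AddChar F ℂ) :
    gaussSum χ ψ + gaussSum (η * χ) ψ = ∑ x, χ (x ^ 2) * ψ (x ^ 2) := by
  rw [sum_apply_sq_eq_sum_one_add_mul hη fun x ↦ χ x * ψ x, gaussSum, gaussSum,
    ← sum_add_distrib]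
  refine sum_congr rfl fun x _ ↦ ?_
  rw [MulChar.coeToFun_mul, Pi.mul_apply]
  ring

theorem sum_mulChar_mul_addChar_mul (χ : MulChar F ℂ) (ψ : AddChar F ℂ) {a : F} (ha : a ≠ 0) :
    ∑ x, χ x * ψ (a * x) = χ⁻¹ a * gaussSum χ ψ := by
  simpa [gaussSum] using gaussSum_mulShift_eq χ ψ (Units.mk0 a ha)

theorem sum_sum_mulChar_mul_mulChar_add_mul_addChar (χ χ' : MulChar F ℂ) (ψ : AddChar F ℂ)
    {c : F} (hc : c ≠ 0) (h2c : 2 * c ≠ 0) :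
    ∑ x, ∑ y, χ x * (χ' (x + y) * ψ (c * (x - y)))
      = χ⁻¹ (2 * c) * χ'⁻¹ (-c) * (gaussSum χ ψ * gaussSum χ' ψ) := by
  calc ∑ x, ∑ y, χ x * (χ' (x + y) * ψ (c * (x - y)))
      = ∑ x, (χ x * ψ (2 * c * x)) * ∑ t, χ' t * ψ (-c * t) := by
        refine sum_congr rfl fun x _ ↦ ?_
        rw [mul_sum]
        refine Fintype.sum_equiv (Equiv.addLeft x) _ _ fun y ↦ ?_
        rw [Equiv.coe_addLeft, mul_mul_mul_comm, mul_comm (ψ _), mul_assoc,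
          ← AddChar.map_add_eq_mul]
        ring_nf
    _ = _ := by
        rw [← sum_mul, sum_mulChar_mul_addChar_mul χ ψ h2c,
          sum_mulChar_mul_addChar_mul χ' ψ (neg_ne_zero.mpr hc)]
        ring

theorem sum_sum_one_add_mul_one_add_mul_mulChar_add_mul_addChar {η χ : MulChar F ℂ}
    (ψ : AddChar F ℂ) (hη₁ : η (-1) = -1) (hχ₁ : χ (-1) = -1) (c : F) :
    ∑ x, ∑ y, (1 + η x) * ((1 + η y) * (χ (x + y) * ψ (c * (x - y))))
      = ∑ x, ∑ y, η x * (χ (x + y) * ψ (c * (x - y)))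
        + ∑ x, ∑ y, η x * (χ (x + y) * ψ (-c * (x - y))) := by
  set f : F → F → ℂ := fun x y ↦ χ (x + y) * ψ (c * (x - y)) with hf
  have symm : ∑ x, ∑ y, (1 + η x) * ((1 + η y) * f x y)
      = ∑ x, ∑ y, (1 - η x) * ((1 - η y) * -f x y) := by
    rw [sum_comm]
    refine Fintype.sum_equiv (Equiv.neg F) _ _ fun y ↦
      Fintype.sum_equiv (Equiv.neg F) _ _ fun x ↦ ?_
    simp only [hf, Equiv.neg_apply, MulChar.apply_neg_of_apply_neg_one hη₁,
      show -y + -x = -(x + y) by ring, show c * (-y - -x) = c * (x - y) by ring,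
      MulChar.apply_neg_of_apply_neg_one hχ₁]
    ring
  have add_symm : ∑ x, ∑ y, (1 + η x) * ((1 + η y) * f x y)
      + ∑ x, ∑ y, (1 - η x) * ((1 - η y) * -f x y)
      = 2 * (∑ x, ∑ y, η x * f x y + ∑ x, ∑ y, η x * (χ (x + y) * ψ (-c * (x - y)))) := by
    rw [sum_comm (f := fun x y ↦ η x * (χ (x + y) * ψ (-c * (x - y)))), mul_add, mul_sum,
      mul_sum, ← sum_add_distrib, ← sum_add_distrib]
    refine sum_congr rfl fun x _ ↦ ?_
    rw [mul_sum, mul_sum, ← sum_add_distrib, ← sum_add_distrib]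
    refine sum_congr rfl fun y _ ↦ ?_
    rw [hf, add_comm y x, show -c * (y - x) = c * (x - y) by ring]
    ring
  linear_combination (add_symm + symm) / 2

theorem sum_sum_mulChar_sq_add_sq_mul_addChar {η χ : MulChar F ℂ} (ψ : AddChar F ℂ)
    (hη : orderOf η = 2) (hη₁ : η (-1) = -1) (hχ₁ : χ (-1) = -1) {c : F} (hc : c ≠ 0) :
    ∑ a, ∑ b, χ (a ^ 2 + b ^ 2) * ψ (c * (a ^ 2 - b ^ 2))
      = -2 * η (2 * c) * χ⁻¹ c * (gaussSum η ψ * gaussSum χ ψ) := by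
  have h2 : (2 : F) ≠ 0 := Ring.two_ne_zero (MulChar.ringChar_ne_two_of_orderOf_eq_two hη)
  have hc' : -c ≠ 0 := neg_ne_zero.mpr hc
  have expand : ∑ a, ∑ b, χ (a ^ 2 + b ^ 2) * ψ (c * (a ^ 2 - b ^ 2))
      = ∑ x, ∑ y, (1 + η x) * ((1 + η y) * (χ (x + y) * ψ (c * (x - y)))) := by
    rw [sum_apply_sq_eq_sum_one_add_mul hη fun s ↦ ∑ b, χ (s + b ^ 2) * ψ (c * (s - b ^ 2))]
    refine sum_congr rfl fun x _ ↦ ?_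
    rw [sum_apply_sq_eq_sum_one_add_mul hη fun y ↦ χ (x + y) * ψ (c * (x - y)), mul_sum]
  have hχinv₁ : χ⁻¹ (-1) = -1 := by rw [MulChar.inv_apply_eq_inv', hχ₁, inv_neg, inv_one]
  rw [expand, sum_sum_one_add_mul_one_add_mul_mulChar_add_mul_addChar ψ hη₁ hχ₁,
    sum_sum_mulChar_mul_mulChar_add_mul_addChar η χ ψ hc (mul_ne_zero h2 hc),
    sum_sum_mulChar_mul_mulChar_add_mul_addChar η χ ψ hc' (mul_ne_zero h2 hc'),
    (MulChar.isQuadratic_of_orderOf_eq_two hη).inv, mul_neg, neg_neg,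
    MulChar.apply_neg_of_apply_neg_one hη₁, MulChar.apply_neg_of_apply_neg_one hχinv₁]
  ring

end CharacterSums

theorem exists_sq_eq_neg_one_and_pow_eq_neg {L : Type*} [Field L] [Fintype L] {Q : ℕ}
    (hL : Fintype.card L = Q ^ 2) (hQ : Q % 4 = 3) : ∃ i : L, i ^ 2 = -1 ∧ i ^ Q = -i := by
  obtain ⟨i, hi⟩ : IsSquare (-1 : L) := by
    rw [FiniteField.isSquare_neg_one_iff, hL, Nat.pow_mod, hQ]
    norm_num
  refine ⟨i, by rw [hi, sq], ?_⟩
  rw [← Nat.div_add_mod Q 4, hQ, pow_add, pow_mul,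
    show i ^ 4 = 1 by linear_combination (-i * i + 1) * hi, one_pow, one_mul]
  linear_combination -i * hi

section FiniteFieldExtension

variable {K L : Type*} [Field K] [Field L] [Fintype K] [Fintype L] [Algebra K L]

theorem Algebra.trace_pow_card (x : L) :
    Algebra.trace K L (x ^ Fintype.card K) = Algebra.trace K L x :=
  Algebra.trace_eq_of_algEquiv (FiniteField.frobeniusAlgEquivOfAlgebraic K L) x

theorem Algebra.norm_pow_card (x : L) :
    Algebra.norm K (x ^ Fintype.card K) = Algebra.norm K x :=
  Algebra.norm_eq_of_algEquiv (FiniteField.frobeniusAlgEquivOfAlgebraic K L) x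

theorem gaussSum_mul_eq_gaussSum_pow_three_mul (hK : Fintype.card K % 4 = 3)
    {χ₄ : MulChar L ℂ} (hχ₄ : χ₄ ^ 4 = 1) {χ : MulChar L ℂ} {χ' : MulChar K ℂ}
    (hχ : ∀ x, χ x = χ' (Algebra.norm K x)) {ψ : AddChar K ℂ} {ψL : AddChar L ℂ}
    (hψ : ∀ x, ψL x = ψ (Algebra.trace K L x)) :
    gaussSum (χ₄ * χ) ψL = gaussSum (χ₄ ^ 3 * χ) ψL := by
  have hpow : χ₄ ^ Fintype.card K = χ₄ ^ 3 := by rw [pow_eq_pow_mod _ hχ₄, hK]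
  refine (Fintype.sum_equiv (FiniteField.frobeniusAlgEquivOfAlgebraic K L).toEquiv _ _
    fun x ↦ ?_).symm
  simp only [AlgEquiv.toEquiv_eq_coe, EquivLike.coe_coe,
    FiniteField.coe_frobeniusAlgEquivOfAlgebraic, MulChar.coeToFun_mul, Pi.mul_apply]
  rw [hψ, hψ, Algebra.trace_pow_card, hχ, hχ, Algebra.norm_pow_card, map_pow,
    ← MulChar.pow_apply' _ Fintype.card_ne_zero, hpow]

theorem finrank_eq_two_of_card_eq_sq (hcard : Fintype.card L = Fintype.card K ^ 2) :
    Module.finrank K L = 2 := by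
  have h := Module.card_eq_pow_finrank (K := K) (V := L)
  rw [hcard] at h
  exact (Nat.pow_right_injective Fintype.one_lt_card h).symm

theorem algebraMap_trace_eq_add_pow_card (hcard : Fintype.card L = Fintype.card K ^ 2) (x : L) :
    algebraMap K L (Algebra.trace K L x) = x + x ^ Fintype.card K := by
  rw [FiniteField.algebraMap_trace_eq_sum_pow, finrank_eq_two_of_card_eq_sq hcard,
    sum_range_succ, sum_range_one, pow_zero, pow_one, pow_one, Nat.card_eq_fintype_card]

theorem algebraMap_norm_eq_mul_pow_card (hcard : Fintype.card L = Fintype.card K ^ 2) (x : L) :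
    algebraMap K L (Algebra.norm K x) = x * x ^ Fintype.card K := by
  rw [FiniteField.algebraMap_norm_eq_prod_pow, finrank_eq_two_of_card_eq_sq hcard,
    prod_range_succ, prod_range_one, pow_zero, pow_one, pow_one, Nat.card_eq_fintype_card]

theorem quadraticChar_norm (hcard : Fintype.card L = Fintype.card K ^ 2) (hK : ringChar K ≠ 2)
    (x : L) : quadraticChar K (Algebra.norm K x) = quadraticChar L x := by
  have hL : ringChar L ≠ 2 := Algebra.ringChar_eq K L ▸ hK
  refine (quadraticChar_isQuadratic K).eq_of_eq_coe (quadraticChar_isQuadratic L) hL ?_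
  obtain ⟨k, hk⟩ : Odd (Fintype.card K) :=
    Nat.odd_iff.mpr (FiniteField.odd_card_of_char_ne_two hK)
  have hexp : (Fintype.card K + 1) * (Fintype.card K / 2) = Fintype.card L / 2 := by
    rw [hcard, hk, show (2 * k + 1) ^ 2 = 2 * (2 * k * k + 2 * k) + 1 by ring,
      Nat.mul_add_div two_pos, Nat.mul_add_div two_pos]
    simp only [Nat.reduceDiv, add_zero]
    ring
  rw [quadraticChar_eq_pow_of_char_ne_two' hL, ← map_intCast (algebraMap K L),
    quadraticChar_eq_pow_of_char_ne_two' hK, map_pow, algebraMap_norm_eq_mul_pow_card hcard,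
    ← pow_succ', ← pow_mul, hexp]

theorem algebraMap_add_algebraMap_mul_pow_card {i : L} (hi : i ^ Fintype.card K = -i) (a b : K) :
    (algebraMap K L a + algebraMap K L b * i) ^ Fintype.card K
      = algebraMap K L a - algebraMap K L b * i := by
  have hσ (y : L) : FiniteField.frobeniusAlgEquivOfAlgebraic K L y = y ^ Fintype.card K := rfl
  rw [← hσ, map_add, map_mul, AlgEquiv.commutes, AlgEquiv.commutes, hσ, hi]
  ring

theorem bijective_algebraMap_add_algebraMap_mul (hcard : Fintype.card L = Fintype.card K ^ 2)
    (h2 : (2 : L) ≠ 0) {i : L} (hi0 : i ≠ 0) (hi : i ^ Fintype.card K = -i) :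
    Function.Bijective fun ab : K × K ↦ algebraMap K L ab.1 + algebraMap K L ab.2 * i := by
  refine (Fintype.bijective_iff_injective_and_card _).mpr ⟨fun ab cd h ↦ ?_, ?_⟩
  · have h' := algebraMap_add_algebraMap_mul_pow_card hi ab.1 ab.2 ▸
      algebraMap_add_algebraMap_mul_pow_card hi cd.1 cd.2 ▸
      congrArg (· ^ Fintype.card K) h
    have h₁ : algebraMap K L ab.1 = algebraMap K L cd.1 :=
      mul_left_cancel₀ h2 (by linear_combination h + h')
    have h₂ : algebraMap K L ab.2 = algebraMap K L cd.2 :=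
      mul_left_cancel₀ (mul_ne_zero h2 hi0) (by linear_combination h - h')
    exact Prod.ext ((algebraMap K L).injective h₁) ((algebraMap K L).injective h₂)
  · rw [Fintype.card_prod, hcard, sq]

theorem sum_norm_trace_sq_eq_sum_sum (hcard : Fintype.card L = Fintype.card K ^ 2)
    (hK : Fintype.card K % 4 = 3) (f : K → K → ℂ) :
    ∑ γ : L, f (Algebra.norm K γ) (Algebra.trace K L (γ ^ 2))
      = ∑ a, ∑ b, f (a ^ 2 + b ^ 2) (2 * (a ^ 2 - b ^ 2)) := by
  obtain ⟨i, hi, hiQ⟩ := exists_sq_eq_neg_one_and_pow_eq_neg hcard hK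
  have hi0 : i ≠ 0 := by rintro rfl; simp at hi
  have h2 : (2 : L) ≠ 0 := Ring.two_ne_zero <| Algebra.ringChar_eq K L ▸ fun h ↦ by
    have := (FiniteField.even_card_iff_char_two (F := K)).mp h
    omega
  have norm_eq (a b : K) :
      Algebra.norm K (algebraMap K L a + algebraMap K L b * i) = a ^ 2 + b ^ 2 := by
    apply (algebraMap K L).injective
    rw [algebraMap_norm_eq_mul_pow_card hcard, algebraMap_add_algebraMap_mul_pow_card hiQ,
      map_add, map_pow, map_pow]
    linear_combination -(algebraMap K L b) ^ 2 * hi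
  have trace_sq_eq (a b : K) : Algebra.trace K L ((algebraMap K L a + algebraMap K L b * i) ^ 2)
      = 2 * (a ^ 2 - b ^ 2) := by
    apply (algebraMap K L).injective
    rw [algebraMap_trace_eq_add_pow_card hcard, ← pow_mul, mul_comm 2, pow_mul,
      algebraMap_add_algebraMap_mul_pow_card hiQ, map_mul, map_sub, map_pow, map_pow, map_ofNat]
    linear_combination 2 * (algebraMap K L b) ^ 2 * hi
  rw [← Fintype.sum_prod_type']
  exact (Fintype.sum_bijective _ (bijective_algebraMap_add_algebraMap_mul hcard h2 hi0 hiQ) _ _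
    fun ab ↦ by rw [norm_eq, trace_sq_eq]).symm

theorem gaussSum_mul_eq_neg_mul_gaussSum_mul_gaussSum
    (hcard : Fintype.card L = Fintype.card K ^ 2) (hK : Fintype.card K % 4 = 3)
    {χ₄ : MulChar L ℂ} (hχ₄ : orderOf χ₄ = 4) {χ : MulChar L ℂ} {χ' : MulChar K ℂ}
    (hχ : ∀ x, χ x = χ' (Algebra.norm K x)) {η : MulChar K ℂ} (hη : orderOf η = 2)
    {ψ : AddChar K ℂ} {ψL : AddChar L ℂ} (hψ : ∀ x, ψL x = ψ (Algebra.trace K L x)) :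
    gaussSum (χ₄ * χ) ψL = -(η * χ' ^ 2)⁻¹ 2 * (gaussSum η ψ * gaussSum (η * χ' ^ 2) ψ) := by
  have hχ₄sq : orderOf (χ₄ ^ 2) = 2 := by
    rw [orderOf_pow_of_dvd two_ne_zero (by rw [hχ₄]; norm_num), hχ₄]
  have hK2 := MulChar.ringChar_ne_two_of_orderOf_eq_two hη
  have apply_sq (γ : L) : (χ₄ * χ) (γ ^ 2) = (η * χ' ^ 2) (Algebra.norm K γ) := by
    rw [MulChar.coeToFun_mul, MulChar.coeToFun_mul, Pi.mul_apply, Pi.mul_apply, map_pow, hχ,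
      map_pow, map_pow, ← MulChar.pow_apply' χ₄ two_ne_zero, ← MulChar.pow_apply' χ' two_ne_zero,
      MulChar.apply_eq_quadraticChar_of_orderOf_eq_two hχ₄sq, ← quadraticChar_norm hcard hK2,
      ← MulChar.apply_eq_quadraticChar_of_orderOf_eq_two hη]
  have two_mul_eq : 2 * gaussSum (χ₄ * χ) ψL = ∑ γ, (χ₄ * χ) (γ ^ 2) * ψL (γ ^ 2) := by
    rw [two_mul]
    nth_rewrite 2 [gaussSum_mul_eq_gaussSum_pow_three_mul hK (hχ₄ ▸ pow_orderOf_eq_one χ₄) hχ hψ]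
    rw [show χ₄ ^ 3 * χ = χ₄ ^ 2 * (χ₄ * χ) by rw [← mul_assoc, ← pow_succ],
      gaussSum_add_gaussSum_mul_eq_sum_sq hχ₄sq]
  have hη₁ := MulChar.apply_neg_one_of_orderOf_eq_two hη hK
  have hν₁ : (η * χ' ^ 2) (-1) = -1 := by
    rw [MulChar.coeToFun_mul, Pi.mul_apply, hη₁, MulChar.pow_apply' χ' two_ne_zero, ← map_pow,
      neg_one_sq, map_one, mul_one]
  have hη₄ : η (2 * 2) = 1 := by
    rw [← sq, MulChar.apply_eq_quadraticChar_of_orderOf_eq_two hη,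
      quadraticChar_sq_one' (Ring.two_ne_zero hK2), Int.cast_one]
  refine mul_left_cancel₀ (two_ne_zero' ℂ) ?_
  rw [two_mul_eq, sum_congr rfl fun γ _ ↦ by rw [apply_sq, hψ],
    sum_norm_trace_sq_eq_sum_sum hcard hK fun n t ↦ (η * χ' ^ 2) n * ψ t,
    sum_sum_mulChar_sq_add_sq_mul_addChar ψ hη hη₁ hν₁ (Ring.two_ne_zero hK2), hη₄]
  ring

theorem gaussSum_mul_eq_inv_mul_card_mul_gaussSum_div_gaussSum
    (hcard : Fintype.card L = Fintype.card K ^ 2) (hK : Fintype.card K % 4 = 3)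
    {χ₄ : MulChar L ℂ} (hχ₄ : orderOf χ₄ = 4) {χ : MulChar L ℂ} {χ' : MulChar K ℂ}
    (hχ : ∀ x, χ x = χ' (Algebra.norm K x)) {η : MulChar K ℂ} (hη : orderOf η = 2)
    {ψ : AddChar K ℂ} (hψ_prim : ψ.IsPrimitive) {ψL : AddChar L ℂ}
    (hψ : ∀ x, ψL x = ψ (Algebra.trace K L x)) :
    gaussSum (χ₄ * χ) ψL
      = (η * χ' ^ 2)⁻¹ 2 * Fintype.card K * gaussSum (η * χ' ^ 2) ψ / gaussSum η ψ := by
  have hG := MulChar.gaussSum_sq_of_orderOf_eq_two hη hψ_prim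
  rw [MulChar.apply_neg_one_of_orderOf_eq_two hη hK, neg_one_mul] at hG
  have hG0 : gaussSum η ψ ≠ 0 := fun h ↦ by simp [h] at hG
  rw [gaussSum_mul_eq_neg_mul_gaussSum_mul_gaussSum hcard hK hχ₄ hχ hη hψ, eq_div_iff hG0]
  linear_combination (-(η * χ' ^ 2)⁻¹ 2 * gaussSum (η * χ' ^ 2) ψ) * hG

end FiniteFieldExtension

theorem stmt2_general (p s q m N : ℕ) [Fact p.Prime] (hq : q = p ^ s)
    (hq4 : q ^ m % 4 = 3)
    (hNdvd : N ∣ (q ^ m - 1) / (q - 1))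
    (F₁ F₂ : Type) [Field F₁] [Field F₂] [Fintype F₁] [Fintype F₂]
    [Algebra F₁ F₂] [Algebra (ZMod p) F₁] [Algebra (ZMod p) F₂]
    (hF₁ : Fintype.card F₁ = q ^ m) (hF₂ : Fintype.card F₂ = q ^ (2 * m))
    (χ'N : MulChar F₁ ℂ) (hχ'N : orderOf χ'N = N)
    (χN : MulChar F₂ ℂ) (hχN : ∀ α : F₂, χN α = χ'N (Algebra.norm F₁ α))
    (χ₄ : MulChar F₂ ℂ) (hχ₄ : orderOf χ₄ = 4)
    (η : MulChar F₁ ℂ) (hη : orderOf η = 2)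
    (ρ : ℂ) (hρ : ρ = if q ^ m % 8 = 3 then -1 else 1) :
    gaussSumF (χ₄ * χN) (canonPsi p F₂) = gaussSumF (χ₄ ^ 3 * χN) (canonPsi p F₂) ∧
    gaussSumF (χ₄ * χN) (canonPsi p F₂)
      = ρ * (q : ℂ) ^ m * gaussSumF (η * χ'N ^ 2) (canonPsi p F₁)
          / gaussSumF η (canonPsi p F₁) := by
  have hK : Fintype.card F₁ % 4 = 3 := hF₁ ▸ hq4
  have hcard : Fintype.card F₂ = Fintype.card F₁ ^ 2 := by rw [hF₂, hF₁, ← pow_mul, mul_comm]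
  have hψ (x : F₂) := (canonAddChar_trace (p := p) (K := F₁) x).symm
  have hχ'N₂ : χ'N 2 = 1 := by
    simpa using χ'N.apply_natCast_eq_one (s := s)
      (by rw [hF₁, ← hq]; exact Nat.sub_one_dvd_pow_sub_one q m)
      (by rw [hF₁, ← hq]; exact orderOf_dvd_iff_pow_eq_one.mp (hχ'N ▸ hNdvd))
      (n := 2) (by exact_mod_cast Ring.two_ne_zero (MulChar.ringChar_ne_two_of_orderOf_eq_two hη))
  have hν₂ : (η * χ'N ^ 2) 2 = ρ := by
    rw [MulChar.coeToFun_mul, Pi.mul_apply, MulChar.pow_apply' _ two_ne_zero, hχ'N₂, one_pow,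
      mul_one, hρ, ← hF₁, MulChar.apply_two_of_orderOf_eq_two hη hK]
  have hρ₂ : ρ * ρ = 1 := by rw [hρ]; split_ifs <;> norm_num
  simp only [gaussSumF_canonPsi]
  refine ⟨gaussSum_mul_eq_gaussSum_pow_three_mul hK (hχ₄ ▸ pow_orderOf_eq_one χ₄) hχN hψ, ?_⟩
  rw [gaussSum_mul_eq_inv_mul_card_mul_gaussSum_div_gaussSum hcard hK hχ₄ hχN hη
    canonAddChar_isPrimitive hψ, MulChar.inv_apply_eq_inv', hν₂, inv_eq_of_mul_eq_one_right hρ₂,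
    hF₁, Nat.cast_pow]

/-- Let `q^m ≡ 3 (mod 4)` be an odd prime power and `N` an odd positive
divisor of `(q^m-1)/(q-1)`.  Let `χ'_N` be a multiplicative character of order `N` of
`F_{q^m}`, `χ_N` its lift to `F_{q^{2m}}` (via the norm), and `χ_4` a multiplicative
character of order `4` of `F_{q^{2m}}`.  Then `G_{q^{2m}}(χ_4χ_N) = G_{q^{2m}}(χ_4³χ_N)`
and `G_{q^{2m}}(χ_4χ_N) = ρ·q^m·G_{q^m}(ηχ'_N²)/G_{q^m}(η)`, where `η` is the quadratic
character of `F_{q^m}` and `ρ = -1` if `q^m ≡ 3 (mod 8)`, `ρ = 1` if `q^m ≡ 7 (mod 8)`. -/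
theorem stmt2 (p s q m N : ℕ) [Fact p.Prime] (hq : q = p ^ s) (hs : 0 < s) (hm : 0 < m)
    (hq4 : q ^ m % 4 = 3) (hNodd : Odd N) (hNpos : 0 < N)
    (hNdvd : N ∣ (q ^ m - 1) / (q - 1))
    (F₁ F₂ : Type) [Field F₁] [Field F₂] [Fintype F₁] [Fintype F₂]
    [Algebra F₁ F₂] [Algebra (ZMod p) F₁] [Algebra (ZMod p) F₂]
    (hF₁ : Fintype.card F₁ = q ^ m) (hF₂ : Fintype.card F₂ = q ^ (2 * m))
    (χ'N : MulChar F₁ ℂ) (hχ'N : orderOf χ'N = N)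
    (χN : MulChar F₂ ℂ) (hχN : ∀ α : F₂, χN α = χ'N (Algebra.norm F₁ α))
    (χ₄ : MulChar F₂ ℂ) (hχ₄ : orderOf χ₄ = 4)
    (η : MulChar F₁ ℂ) (hη : orderOf η = 2)
    (ρ : ℂ) (hρ : ρ = if q ^ m % 8 = 3 then -1 else 1) :
    gaussSumF (χ₄ * χN) (canonPsi p F₂) = gaussSumF (χ₄ ^ 3 * χN) (canonPsi p F₂) ∧
    gaussSumF (χ₄ * χN) (canonPsi p F₂)
      = ρ * (q : ℂ) ^ m * gaussSumF (η * χ'N ^ 2) (canonPsi p F₁)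
          / gaussSumF η (canonPsi p F₁) :=
  stmt2_general p s q m N hq hq4 hNdvd F₁ F₂ hF₁ hF₂ χ'N hχ'N χN hχN χ₄ hχ₄ η hη ρ hρ
end

section
/- Let q be an odd prime power, M an odd positive integer dividing q²+q+1, and N = (q²+q+1)/M. Assume the Gauss periods ψ_{F_{q³}}(C_i^{(N,q³)}), 0 ≤ i ≤ N−1, take exactly the three values −M+2q, −M+q, −M, and set I_1, I_2, I_3 to be the sets of indices i ∈ Z_N for which the Gauss period equals −M+2q, −M+q, −M respectively. Then |I_1| = (M−1)/2, |I_2| = q−M+2, and |I_3| = (q²+q+1)/M − q + (M−3)/2. -/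
/-!
Let `η_i = ψ(C_i)` and `f = |C_0| = (q³ - 1)/N = (q - 1)M`. The classes `C_i`, `i < N`, partition
`F^×`, so `Σ η_i = Σ_{x ≠ 0} ψ(x) = -1`. For `x ∈ C_i` we have `C_i = x C_0`, hence
`Σ η_i² = Σ_{w ∈ C_0} Σ_{x ≠ 0} ψ(x(1 + w))`; the inner sum is `q³ - 1` if `w = -1` and `-1`
otherwise, and `-1 ∈ C_0` because `f` is even, so `Σ η_i² = q³ - f`. If `a, b, c` periods take the
values `-M + 2q, -M + q, -M`, these two moments and `a + b + c = N` give `2a + b = q + 1` and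
`4a + b = q + M`, which determine `a, b, c`.
-/

open scoped Classical

def cycClass {F : Type} [Field F] (ω : F) (N i : ℕ) : Set F :=
  {x | ∃ k : ℕ, x = ω ^ i * (ω ^ N) ^ k}

noncomputable def psiSum {F : Type} [Field F] [Fintype F] (ψ : F → ℂ) (S : Set F) : ℂ :=
  ∑ x ∈ S.toFinset, ψ x

open Finset

theorem exists_isPrimitive_eq_canonPsi (p : ℕ) [Fact p.Prime] (F : Type) [Field F] [Fintype F]
    [Algebra (ZMod p) F] : ∃ ψ : AddChar F ℂ, ψ.IsPrimitive ∧ ⇑ψ = canonPsi p F := by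
  let ψ : AddChar F ℂ :=
    (ZMod.stdAddChar (N := p)).compAddMonoidHom (Algebra.trace (ZMod p) F).toAddMonoidHom
  refine ⟨ψ, AddChar.IsPrimitive.of_ne_one ?_, funext fun x => ?_⟩
  · obtain ⟨b, hb⟩ := Algebra.trace_surjective (ZMod p) F 1
    refine AddChar.ne_one_iff.mpr ⟨b, fun h => one_ne_zero (α := ZMod p) ?_⟩
    rw [← (ZMod.stdAddChar (N := p)).map_zero_eq_one] at h
    exact hb ▸ ZMod.injective_stdAddChar h
  · have h := ZMod.stdAddChar_coe (N := p) ((Algebra.trace (ZMod p) F x).val : ℤ)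
    simp only [Int.cast_natCast, ZMod.natCast_zmod_val] at h
    simp [ψ, canonPsi, h]

section CyclotomicClasses

variable {F : Type} [Field F] {ω : F} {N : ℕ}

theorem ne_zero_of_mem_cycClass (hω0 : ω ≠ 0) {i : ℕ} {x : F} (hx : x ∈ cycClass ω N i) :
    x ≠ 0 := by
  obtain ⟨k, rfl⟩ := hx
  exact mul_ne_zero (pow_ne_zero _ hω0) (pow_ne_zero _ (pow_ne_zero _ hω0))

variable [Fintype F]

theorem card_sub_one_ne_zero_of_nontrivial {α : Type*} [Fintype α] [Nontrivial α] :
    Fintype.card α - 1 ≠ 0 := by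
  have := Fintype.one_lt_card (α := α)
  omega

theorem pos_of_dvd_card_sub_one {α : Type*} [Fintype α] [Nontrivial α] {N : ℕ}
    (hN : N ∣ Fintype.card α - 1) : 0 < N :=
  Nat.pos_of_ne_zero (by rintro rfl; exact card_sub_one_ne_zero_of_nontrivial (zero_dvd_iff.1 hN))

-- Without `2 < Fintype.card F`, `ω = 0` would qualify in `𝔽₂`, since `0 ^ 0 = 1`.
theorem isPrimitiveRoot_of_forall_exists_pow_eq (hcard : 2 < Fintype.card F)
    (hω : ∀ x : F, x ≠ 0 → ∃ k : ℕ, ω ^ k = x) : IsPrimitiveRoot ω (Fintype.card F - 1) := by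
  have hω0 : ω ≠ 0 := by
    obtain ⟨v, hv⟩ := Fintype.exists_ne_of_one_lt_card
      (by rw [Fintype.card_units]; omega : 1 < Fintype.card Fˣ) 1
    obtain ⟨k, hk⟩ := hω v v.ne_zero
    rintro rfl
    rcases k with _ | k
    · exact hv (Units.ext (by simpa using hk.symm))
    · exact v.ne_zero (by simpa using hk.symm)
  let u : Fˣ := Units.mk0 ω hω0
  have hgen : ∀ v : Fˣ, v ∈ Subgroup.zpowers u := fun v => by
    obtain ⟨k, hk⟩ := hω v v.ne_zero
    exact ⟨k, Units.ext (by simpa [u] using hk)⟩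
  have hord : orderOf ω = Fintype.card F - 1 := by
    rw [← Fintype.card_units, ← Nat.card_eq_fintype_card,
      ← orderOf_eq_card_of_forall_mem_zpowers hgen, ← orderOf_units]
    rfl
  exact hord ▸ IsPrimitiveRoot.orderOf ω

theorem neg_one_mem_cycClass_zero (hω : IsPrimitiveRoot ω (Fintype.card F - 1)) {f : ℕ}
    (hf : N * f = Fintype.card F - 1) (heven : Even f) : (-1 : F) ∈ cycClass ω N 0 := by
  obtain ⟨t, rfl⟩ := heven
  have htwo : N * (t + t) = N * t * 2 := by ring
  have hNt : N * t ≠ 0 := by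
    have := card_sub_one_ne_zero_of_nontrivial (α := F)
    omega
  have hsq : IsPrimitiveRoot (ω ^ (N * t)) 2 := by
    have := hω.pow_of_dvd hNt ⟨2, by rw [← hf, htwo]⟩
    rwa [← hf, htwo, Nat.mul_div_cancel_left _ (Nat.pos_of_ne_zero hNt)] at this
  exact ⟨t, by rw [pow_zero, one_mul, ← pow_mul, hsq.eq_neg_one_of_two_right]⟩

theorem pow_mem_cycClass_iff (hω : IsPrimitiveRoot ω (Fintype.card F - 1))
    (hN : N ∣ Fintype.card F - 1) {i k : ℕ} (hi : i < N) :
    ω ^ k ∈ cycClass ω N i ↔ k % N = i := by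
  have hfin : IsOfFinOrder ω := hω.isOfFinOrder card_sub_one_ne_zero_of_nontrivial
  constructor
  · rintro ⟨j, hj⟩
    rw [← pow_mul, ← pow_add, hfin.pow_eq_pow_iff_modEq, ← hω.eq_orderOf] at hj
    have := hj.of_dvd hN
    rwa [Nat.ModEq, Nat.add_mul_mod_self_left, Nat.mod_eq_of_lt hi] at this
  · rintro rfl
    exact ⟨k / N, by rw [← pow_mul, ← pow_add, Nat.mod_add_div]⟩

theorem exists_pow_eq_of_ne_zero (hω : IsPrimitiveRoot ω (Fintype.card F - 1)) {x : F}
    (hx : x ≠ 0) : ∃ k : ℕ, ω ^ k = x := by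
  have : NeZero (Fintype.card F - 1) := ⟨card_sub_one_ne_zero_of_nontrivial⟩
  obtain ⟨k, -, hk⟩ := hω.eq_pow_of_pow_eq_one (FiniteField.pow_card_sub_one_eq_one x hx)
  exact ⟨k, hk⟩

theorem biUnion_cycClass_toFinset (hω : IsPrimitiveRoot ω (Fintype.card F - 1))
    (hN : N ∣ Fintype.card F - 1) :
    (range N).biUnion (fun i => (cycClass ω N i).toFinset) = univ.erase 0 := by
  have hm : Fintype.card F - 1 ≠ 0 := card_sub_one_ne_zero_of_nontrivial
  ext x
  simp only [mem_biUnion, mem_range, Set.mem_toFinset, mem_erase, mem_univ, and_true]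
  constructor
  · rintro ⟨i, -, hx⟩
    exact ne_zero_of_mem_cycClass (hω.ne_zero hm) hx
  · intro hx
    obtain ⟨k, rfl⟩ := exists_pow_eq_of_ne_zero hω hx
    have hN0 : 0 < N := pos_of_dvd_card_sub_one hN
    exact ⟨k % N, Nat.mod_lt _ hN0, (pow_mem_cycClass_iff hω hN (Nat.mod_lt _ hN0)).2 rfl⟩

theorem pairwiseDisjoint_cycClass_toFinset (hω : IsPrimitiveRoot ω (Fintype.card F - 1))
    (hN : N ∣ Fintype.card F - 1) :
    ((range N : Finset ℕ) : Set ℕ).PairwiseDisjoint (fun i => (cycClass ω N i).toFinset) := by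
  have hm : Fintype.card F - 1 ≠ 0 := card_sub_one_ne_zero_of_nontrivial
  intro i hi j hj hij
  simp only [coe_range, Set.mem_Iio] at hi hj
  refine Finset.disjoint_left.2 fun x hxi hxj => hij ?_
  rw [Set.mem_toFinset] at hxi hxj
  obtain ⟨k, rfl⟩ := exists_pow_eq_of_ne_zero hω (ne_zero_of_mem_cycClass (hω.ne_zero hm) hxi)
  rw [pow_mem_cycClass_iff hω hN hi] at hxi
  rw [pow_mem_cycClass_iff hω hN hj] at hxj
  exact hxi.symm.trans hxj

theorem sum_range_sum_cycClass_toFinset (hω : IsPrimitiveRoot ω (Fintype.card F - 1))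
    (hN : N ∣ Fintype.card F - 1) {R : Type*} [AddCommMonoid R] (g : F → R) :
    ∑ i ∈ range N, ∑ x ∈ (cycClass ω N i).toFinset, g x = ∑ x ∈ univ.erase 0, g x := by
  rw [← sum_biUnion (pairwiseDisjoint_cycClass_toFinset hω hN), biUnion_cycClass_toFinset hω hN]

theorem cycClass_toFinset_eq_image_mul (hω : IsPrimitiveRoot ω (Fintype.card F - 1))
    (hN : N ∣ Fintype.card F - 1) {i : ℕ} (hi : i < N) {x : F} (hx : x ∈ cycClass ω N i) :
    (cycClass ω N i).toFinset = (cycClass ω N 0).toFinset.image (x * ·) := by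
  have hω0 : ω ≠ 0 := hω.ne_zero card_sub_one_ne_zero_of_nontrivial
  have hN0 : 0 < N := by omega
  obtain ⟨k, rfl⟩ := exists_pow_eq_of_ne_zero hω (ne_zero_of_mem_cycClass hω0 hx)
  rw [pow_mem_cycClass_iff hω hN hi] at hx
  ext y
  simp only [Set.mem_toFinset, mem_image]
  constructor
  · intro hy
    obtain ⟨t, ht⟩ := exists_pow_eq_of_ne_zero hω
      (div_ne_zero (ne_zero_of_mem_cycClass hω0 hy) (pow_ne_zero k hω0))
    have hyk : ω ^ (k + t) = y := by rw [pow_add, ht, mul_div_cancel₀ _ (pow_ne_zero k hω0)]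
    rw [← hyk, pow_mem_cycClass_iff hω hN hi] at hy
    have hmod : t ≡ 0 [MOD N] := Nat.ModEq.add_left_cancel' k (hy.trans hx.symm)
    exact ⟨ω ^ t, (pow_mem_cycClass_iff hω hN hN0).2 hmod, by rw [← pow_add, hyk]⟩
  · rintro ⟨w, hw, rfl⟩
    obtain ⟨l, rfl⟩ := exists_pow_eq_of_ne_zero hω (ne_zero_of_mem_cycClass hω0 hw)
    rw [pow_mem_cycClass_iff hω hN hN0] at hw
    rw [← pow_add, pow_mem_cycClass_iff hω hN hi, Nat.add_mod, hw, add_zero, Nat.mod_mod, hx]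

theorem card_cycClass_zero (hω : IsPrimitiveRoot ω (Fintype.card F - 1)) {f : ℕ}
    (hf : N * f = Fintype.card F - 1) : #(cycClass ω N 0).toFinset = f := by
  have hN : N ∣ Fintype.card F - 1 := ⟨f, hf.symm⟩
  have hω0 : ω ≠ 0 := hω.ne_zero card_sub_one_ne_zero_of_nontrivial
  have hN0 : 0 < N := pos_of_dvd_card_sub_one hN
  have hcard : ∀ i ∈ range N, #(cycClass ω N i).toFinset = #(cycClass ω N 0).toFinset := by
    intro i hi
    have hi' := mem_range.1 hi
    rw [cycClass_toFinset_eq_image_mul hω hN hi'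
        ((pow_mem_cycClass_iff hω hN hi').2 (Nat.mod_eq_of_lt hi')),
      card_image_of_injective _ (mul_right_injective₀ (pow_ne_zero i hω0))]
  have hsum := sum_range_sum_cycClass_toFinset hω hN (fun _ => 1)
  simp only [sum_const, smul_eq_mul, mul_one] at hsum
  rw [sum_congr rfl hcard, sum_const, card_range, card_erase_of_mem (mem_univ _), card_univ,
    ← hf, smul_eq_mul] at hsum
  exact Nat.eq_of_mul_eq_mul_left hN0 hsum

end CyclotomicClasses

section GaussPeriods

variable {F : Type} [Field F] [Fintype F] {ψ : AddChar F ℂ} {ω : F} {N : ℕ}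

theorem sum_erase_zero_mulShift {R : Type*} [CommRing R] [IsDomain R] {χ : AddChar F R}
    (hχ : χ.IsPrimitive) (b : F) :
    ∑ x ∈ univ.erase 0, χ (x * b) = (if b = 0 then (Fintype.card F : R) else 0) - 1 := by
  rw [sum_erase_eq_sub (mem_univ 0), AddChar.sum_mulShift b hχ, zero_mul,
    AddChar.map_zero_eq_one, Nat.cast_ite, Nat.cast_zero]

theorem sum_range_psiSum_cycClass (hψ : ψ.IsPrimitive)
    (hω : IsPrimitiveRoot ω (Fintype.card F - 1)) (hN : N ∣ Fintype.card F - 1) :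
    ∑ i ∈ range N, psiSum ψ (cycClass ω N i) = -1 := by
  simp only [psiSum]
  rw [sum_range_sum_cycClass_toFinset hω hN]
  simpa using sum_erase_zero_mulShift hψ 1

theorem sum_range_psiSum_cycClass_sq (hψ : ψ.IsPrimitive)
    (hω : IsPrimitiveRoot ω (Fintype.card F - 1)) {f : ℕ} (hf : N * f = Fintype.card F - 1)
    (hneg : (-1 : F) ∈ cycClass ω N 0) :
    ∑ i ∈ range N, psiSum ψ (cycClass ω N i) ^ 2 = Fintype.card F - f := by
  have hN : N ∣ Fintype.card F - 1 := ⟨f, hf.symm⟩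
  have hω0 : ω ≠ 0 := hω.ne_zero card_sub_one_ne_zero_of_nontrivial
  calc ∑ i ∈ range N, psiSum ψ (cycClass ω N i) ^ 2
      = ∑ i ∈ range N, ∑ x ∈ (cycClass ω N i).toFinset,
          ∑ w ∈ (cycClass ω N 0).toFinset, ψ (x * (1 + w)) := by
        refine sum_congr rfl fun i hi => ?_
        rw [psiSum, sq, sum_mul_sum]
        refine sum_congr rfl fun x hx => ?_
        have hx' := Set.mem_toFinset.1 hx
        rw [cycClass_toFinset_eq_image_mul hω hN (mem_range.1 hi) hx',
          sum_image (mul_right_injective₀ (ne_zero_of_mem_cycClass hω0 hx')).injOn]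
        simp [mul_add, AddChar.map_add_eq_mul]
    _ = ∑ x ∈ univ.erase 0, ∑ w ∈ (cycClass ω N 0).toFinset, ψ (x * (1 + w)) :=
        sum_range_sum_cycClass_toFinset hω hN _
    _ = ∑ w ∈ (cycClass ω N 0).toFinset,
          ((if 1 + w = 0 then (Fintype.card F : ℂ) else 0) - 1) := by
        rw [sum_comm]
        exact sum_congr rfl fun w _ => sum_erase_zero_mulShift hψ _
    _ = Fintype.card F - f := by
        rw [sum_sub_distrib, sum_const, card_cycClass_zero hω hf]
        simp [add_eq_zero_iff_eq_neg', hneg]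

end GaussPeriods

theorem sum_comp_eq_of_three_values {ι α β : Type*} [AddCommMonoid β] {s : Finset ι}
    {g : ι → α} {a b c : α} (hab : a ≠ b) (hac : a ≠ c) (hbc : b ≠ c)
    (hg : ∀ i ∈ s, g i = a ∨ g i = b ∨ g i = c) (h : α → β) :
    ∑ i ∈ s, h (g i) =
      #{i ∈ s | g i = a} • h a + #{i ∈ s | g i = b} • h b + #{i ∈ s | g i = c} • h c := by
  have himage : s.image g ⊆ {a, b, c} := by
    intro y hy
    obtain ⟨i, hi, rfl⟩ := mem_image.1 hy
    simpa using hg i hi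
  have hzero : ∀ y ∈ ({a, b, c} : Finset α), y ∉ s.image g → #{i ∈ s | g i = y} • h y = 0 := by
    intro y _ hy
    rw [card_eq_zero.2 (filter_eq_empty_iff.2 fun i hi (hiy : g i = y) =>
      hy (hiy ▸ mem_image_of_mem g hi)), zero_smul]
  rw [sum_comp h g, sum_subset himage hzero, sum_insert (by simp [hab, hac]), sum_pair hbc,
    add_assoc]

theorem counts_eq_of_moments {K : Type*} [Field K] [CharZero K] {q M N a b c : ℕ} (hq : q ≠ 0)
    (hNM : N * M = q ^ 2 + q + 1) (h0 : a + b + c = N)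
    (h1 : (a : K) * (-(M : K) + 2 * q) + b * (-(M : K) + q) + c * (-(M : K)) = -1)
    (h2 : (a : K) * (-(M : K) + 2 * q) ^ 2 + b * (-(M : K) + q) ^ 2 + c * (-(M : K)) ^ 2
      = q ^ 3 - (q - 1) * M) :
    2 * a + b = q + 1 ∧ 4 * a + b = q + M := by
  have hqK : (q : K) ≠ 0 := Nat.cast_ne_zero.2 hq
  have h0K : (a : K) + b + c = N := by exact_mod_cast h0
  have hNMK : (N : K) * M = q ^ 2 + q + 1 := by exact_mod_cast hNM
  have e1 : (q : K) * (2 * a + b) = q * (q + 1) := by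
    linear_combination h1 + (M : K) * h0K + hNMK
  have e1' : (2 * a + b : K) = q + 1 := mul_left_cancel₀ hqK e1
  have e2 : (q : K) ^ 2 * (4 * a + b) = q ^ 2 * (q + M) := by
    linear_combination h2 - (M : K) ^ 2 * h0K + 2 * (M : K) * q * e1' - (M : K) * hNMK
  have e2' : (4 * a + b : K) = q + M := mul_left_cancel₀ (pow_ne_zero 2 hqK) e2
  exact ⟨by exact_mod_cast e1', by exact_mod_cast e2'⟩

theorem counts_of_three_valued_moments {ι K : Type*} [Field K] [CharZero K] {s : Finset ι}
    {G : ι → K} {q M : ℕ} (hq : q ≠ 0) (hM : #s * M = q ^ 2 + q + 1)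
    (hG : ∀ i ∈ s, G i = -(M : K) + 2 * q ∨ G i = -(M : K) + q ∨ G i = -(M : K))
    (h1 : ∑ i ∈ s, G i = -1) (h2 : ∑ i ∈ s, G i ^ 2 = q ^ 3 - (q - 1) * M) :
    #{i ∈ s | G i = -(M : K) + 2 * q} + #{i ∈ s | G i = -(M : K) + q} +
        #{i ∈ s | G i = -(M : K)} = #s ∧
      2 * #{i ∈ s | G i = -(M : K) + 2 * q} + #{i ∈ s | G i = -(M : K) + q} = q + 1 ∧
      4 * #{i ∈ s | G i = -(M : K) + 2 * q} + #{i ∈ s | G i = -(M : K) + q} = q + M := by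
  have hqK : (q : K) ≠ 0 := Nat.cast_ne_zero.2 hq
  have hab : -(M : K) + 2 * q ≠ -(M : K) + q := fun h => hqK (by linear_combination h)
  have hac : -(M : K) + 2 * q ≠ -(M : K) := fun h => hqK (by linear_combination h / 2)
  have hbc : -(M : K) + q ≠ -(M : K) := fun h => hqK (by linear_combination h)
  have h0 := (sum_comp_eq_of_three_values hab hac hbc hG fun _ => (1 : ℕ)).symm
  have h1' := (sum_comp_eq_of_three_values hab hac hbc hG id).symm.trans h1
  have h2' := (sum_comp_eq_of_three_values hab hac hbc hG (· ^ 2)).symm.trans h2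
  simp only [sum_const, smul_eq_mul, mul_one] at h0
  simp only [nsmul_eq_mul, id] at h1' h2'
  exact ⟨h0, counts_eq_of_moments hq hM h0 h1' h2'⟩

theorem eq_or_eq_or_eq_of_setOf_eq {α : Type*} {G : ℕ → α} {N : ℕ} {a b c : α}
    (h : {v | ∃ i < N, G i = v} = {a, b, c}) : ∀ i ∈ range N, G i = a ∨ G i = b ∨ G i = c := by
  intro i hi
  have hmem : G i ∈ ({a, b, c} : Set α) := h ▸ ⟨i, mem_range.1 hi, rfl⟩
  simpa using hmem

theorem mul_sub_one_mul_eq_pow_three_sub_one {q M N : ℕ} (hq : 1 ≤ q)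
    (hNM : N * M = q ^ 2 + q + 1) : N * ((q - 1) * M) = q ^ 3 - 1 := by
  have : 1 ≤ q ^ 3 := Nat.one_le_pow _ _ hq
  zify [hq, this] at hNM ⊢
  linear_combination ((q : ℤ) - 1) * hNM

theorem stmt4_general (p q M N : ℕ) [Fact p.Prime]
    (hodd : Odd q) (hMdvd : M ∣ q ^ 2 + q + 1)
    (hN : N = (q ^ 2 + q + 1) / M)
    (F : Type) [Field F] [Fintype F] [Algebra (ZMod p) F]
    (hF : Fintype.card F = q ^ 3)
    (ω : F) (hω : ∀ x : F, x ≠ 0 → ∃ k : ℕ, ω ^ k = x)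
    (hthree : {v : ℂ | ∃ i < N, psiSum (canonPsi p F) (cycClass ω N i) = v}
      = {(-(M : ℂ) + 2 * (q : ℂ)), (-(M : ℂ) + (q : ℂ)), (-(M : ℂ))})
    (I₁ I₂ I₃ : Finset ℕ)
    (hI₁ : I₁ = (Finset.range N).filter
      (fun i => psiSum (canonPsi p F) (cycClass ω N i) = -(M : ℂ) + 2 * (q : ℂ)))
    (hI₂ : I₂ = (Finset.range N).filter
      (fun i => psiSum (canonPsi p F) (cycClass ω N i) = -(M : ℂ) + (q : ℂ)))
    (hI₃ : I₃ = (Finset.range N).filter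
      (fun i => psiSum (canonPsi p F) (cycClass ω N i) = -(M : ℂ))) :
    (I₁.card : ℤ) = ((M : ℤ) - 1) / 2 ∧ (I₂.card : ℤ) = (q : ℤ) - M + 2 ∧
      (I₃.card : ℤ) = ((q : ℤ) ^ 2 + q + 1) / M - q + ((M : ℤ) - 3) / 2 := by
  obtain ⟨ψ, hψ, hψF⟩ := exists_isPrimitive_eq_canonPsi p F
  rw [← hψF] at hthree hI₁ hI₂ hI₃
  subst hI₁ hI₂ hI₃
  have hNM : N * M = q ^ 2 + q + 1 := hN ▸ Nat.div_mul_cancel hMdvd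
  have hq : 1 < q := (one_lt_pow_iff three_ne_zero).1 (hF ▸ Fintype.one_lt_card)
  have hf : N * ((q - 1) * M) = Fintype.card F - 1 :=
    hF ▸ mul_sub_one_mul_eq_pow_three_sub_one hq.le hNM
  have hω' : IsPrimitiveRoot ω (Fintype.card F - 1) := isPrimitiveRoot_of_forall_exists_pow_eq
    (hF ▸ lt_of_lt_of_le (by norm_num) (Nat.pow_le_pow_left hq 3)) hω
  have hneg := neg_one_mem_cycClass_zero hω' hf ((Nat.Odd.sub_odd hodd odd_one).mul_right M)
  have hsq := sum_range_psiSum_cycClass_sq hψ hω' hf hneg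
  rw [hF] at hsq
  push_cast [Nat.cast_sub hq.le] at hsq
  obtain ⟨h0, h1, h2⟩ := counts_of_three_valued_moments (by omega) (by rwa [card_range])
    (eq_or_eq_or_eq_of_setOf_eq hthree)
    (sum_range_psiSum_cycClass hψ hω' ⟨_, hf.symm⟩) hsq
  have hNMZ : (q : ℤ) ^ 2 + q + 1 = N * M := by exact_mod_cast hNM.symm
  have hM : M ≠ 0 := by
    rintro rfl
    simp at hNM
  rw [hNMZ, Int.mul_ediv_cancel _ (by exact_mod_cast hM)]
  rw [card_range] at h0
  omega

/-- Let `q` be an odd prime power, `M` an odd positive divisor of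
`q²+q+1` and `N = (q²+q+1)/M`. If the Gauss periods `ψ_{F_{q³}}(C_i^{(N,q³)})`,
`0 ≤ i ≤ N-1`, take exactly the three values `-M+2q`, `-M+q`, `-M` and `I_1, I_2, I_3`
are the corresponding index sets, then `|I_1| = (M-1)/2`, `|I_2| = q-M+2` and
`|I_3| = (q²+q+1)/M - q + (M-3)/2`. -/
theorem stmt4 (p n q M N : ℕ) [Fact p.Prime] (hq : q = p ^ n) (hn : 0 < n)
    (hodd : Odd q) (hModd : Odd M) (hM : 0 < M) (hMdvd : M ∣ q ^ 2 + q + 1)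
    (hN : N = (q ^ 2 + q + 1) / M)
    (F : Type) [Field F] [Fintype F] [Algebra (ZMod p) F]
    (hF : Fintype.card F = q ^ 3)
    (ω : F) (hω : ∀ x : F, x ≠ 0 → ∃ k : ℕ, ω ^ k = x)
    (hthree : {v : ℂ | ∃ i < N, psiSum (canonPsi p F) (cycClass ω N i) = v}
      = {(-(M : ℂ) + 2 * (q : ℂ)), (-(M : ℂ) + (q : ℂ)), (-(M : ℂ))})
    (I₁ I₂ I₃ : Finset ℕ)
    (hI₁ : I₁ = (Finset.range N).filter
      (fun i => psiSum (canonPsi p F) (cycClass ω N i) = -(M : ℂ) + 2 * (q : ℂ)))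
    (hI₂ : I₂ = (Finset.range N).filter
      (fun i => psiSum (canonPsi p F) (cycClass ω N i) = -(M : ℂ) + (q : ℂ)))
    (hI₃ : I₃ = (Finset.range N).filter
      (fun i => psiSum (canonPsi p F) (cycClass ω N i) = -(M : ℂ))) :
    (I₁.card : ℤ) = ((M : ℤ) - 1) / 2 ∧ (I₂.card : ℤ) = (q : ℤ) - M + 2 ∧
      (I₃.card : ℤ) = ((q : ℤ) ^ 2 + q + 1) / M - q + ((M : ℤ) - 3) / 2 :=
  stmt4_general p q M N hodd hMdvd hN F hF ω hω hthree I₁ I₂ I₃ hI₁ hI₂ hI₃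
end

section
/- Let q be an odd prime power with q ≡ 2 or 4 (mod 7), and set N = (q²+q+1)/7. Then the Gauss periods ψ_{F_{q³}}(C_i^{(N,q³)}), i = 0,1,…,N−1, take exactly the three values −7+2q, −7+q, −7. -/
open scoped Classical

/-!
Let `K = 𝔽_q ⊆ F = 𝔽_{q³}`, let `W = ker Tr_{F/K}`, a `K`-plane, and let `β = ω ^ N`, so that
`β ^ 7 = ω ^ (q² + q + 1)` generates `Kˣ`. The class `C_i` is the disjoint union of the seven
punctured lines `ω ^ (i + j N) Kˣ`, `j < 7`, and the character sum over such a line is `q - 1` or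
`-1` according as the line lies in `W` or not. Hence `ψ(C_i) = -7 + q n_i`, where `n_i` counts the
lines of `C_i` inside `W`.

Since `β ^ 7 ∈ K` and `[F : K] = 3`, any three of `x, β x, …, β⁶ x` are linearly independent over
`K` when `q` is odd (in characteristic 2 the exponents `{0, 1, 3}` would give a Fano plane), so
`n_i ≤ 2`. Counting the `q + 1` lines of `W` gives `∑ n_i = q + 1`, and since `W ∩ β⁻ᵈ W` is a line
for `d = 1, …, 6`, `∑ n_i² = q + 7`. So there are three classes with `n_i = 2`, `q - 5` with
`n_i = 1`, and since `N > q + 1` also some with `n_i = 0`.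
-/

open Finset Module

section Character

variable {p : ℕ} [Fact p.Prime] {F : Type} [Field F] [Algebra (ZMod p) F]

theorem canonPsi_eq_stdAddChar (x : F) :
    canonPsi p F x = ZMod.stdAddChar (Algebra.trace (ZMod p) F x) := by
  rw [ZMod.stdAddChar_apply, ZMod.toCircle_apply, canonPsi]

theorem sum_canonPsi_mul [Finite F] (K : IntermediateField (ZMod p) F) [Fintype K] (a : F) :
    ∑ t : K, canonPsi p F (a * t) =
      if Algebra.trace K F a = 0 then (Fintype.card K : ℂ) else 0 := by
  let ψ : AddChar K ℂ :=
    ZMod.stdAddChar.compAddMonoidHom (Algebra.trace (ZMod p) K).toAddMonoidHom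
  have hψ : ψ.IsPrimitive := by
    refine AddChar.IsPrimitive.of_ne_one fun h => ?_
    obtain ⟨t, ht⟩ := Algebra.trace_surjective (ZMod p) K 1
    have h1 : ZMod.stdAddChar (1 : ZMod p) = ZMod.stdAddChar (0 : ZMod p) := by
      simpa [ψ, ht] using DFunLike.congr_fun h t
    exact one_ne_zero (ZMod.injective_stdAddChar h1)
  have key (t : K) : canonPsi p F (a * t) = ψ (t * Algebra.trace K F a) := by
    rw [canonPsi_eq_stdAddChar, ← Algebra.trace_trace (S := K), mul_comm, ← smul_eq_mul,
      ← IntermediateField.smul_def, map_smul, smul_eq_mul]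
    rfl
  simp_rw [key, AddChar.sum_mulShift _ hψ]
  split_ifs <;> simp

theorem two_ne_zero_of_odd (hp : Odd p) : (2 : F) ≠ 0 := by
  rw [← map_ofNat (algebraMap (ZMod p) F), _root_.map_ne_zero, ← Nat.cast_ofNat, Ne,
    ZMod.natCast_eq_zero_iff, Nat.prime_dvd_prime_iff_eq Fact.out Nat.prime_two]
  rintro rfl
  exact Nat.not_odd_iff_even.mpr even_two hp

end Character

section FixedField

variable (p n : ℕ) [Fact p.Prime] (F : Type) [Field F] [Finite F] [Algebra (ZMod p) F]

noncomputable def frobPowFixedField : IntermediateField (ZMod p) F :=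
  IntermediateField.fixedField
    (Subgroup.zpowers (FiniteField.frobeniusAlgEquivOfAlgebraic (ZMod p) F ^ n))

variable {p n F}

theorem mem_frobPowFixedField_iff {x : F} : x ∈ frobPowFixedField p n F ↔ x ^ p ^ n = x := by
  have := MulAction.mem_fixedBy_zpowers_iff_mem_fixedBy (α := F)
    (g := FiniteField.frobeniusAlgEquivOfAlgebraic (ZMod p) F ^ n) (a := x)
  simpa [frobPowFixedField, Subgroup.mem_zpowers_iff, AlgEquiv.coe_pow,
    FiniteField.coe_frobeniusAlgEquivOfAlgebraic_iterate] using this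

theorem finrank_frobPowFixedField {d : ℕ} (hn : n ≠ 0) (hF : Nat.card F = (p ^ n) ^ d) :
    finrank (frobPowFixedField p n F) F = d := by
  have hd : finrank (ZMod p) F = n * d := by
    have := Module.natCard_eq_pow_finrank (K := ZMod p) (V := F)
    rw [hF, Nat.card_zmod, ← pow_mul] at this
    exact (Nat.pow_right_injective (Fact.out : p.Prime).two_le this).symm
  rw [frobPowFixedField, IntermediateField.finrank_fixedField_eq_card, Nat.card_zpowers,
    orderOf_pow_of_dvd hn (by rw [FiniteField.orderOf_frobeniusAlgEquivOfAlgebraic, hd]; simp),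
    FiniteField.orderOf_frobeniusAlgEquivOfAlgebraic, hd, Nat.mul_div_cancel_left _ (by omega)]

theorem natCard_frobPowFixedField {d : ℕ} (hn : n ≠ 0) (hd : d ≠ 0)
    (hF : Nat.card F = (p ^ n) ^ d) :
    Nat.card (frobPowFixedField p n F) = p ^ n := by
  have := Module.natCard_eq_pow_finrank (K := frobPowFixedField p n F) (V := F)
  rw [finrank_frobPowFixedField hn hF, hF] at this
  exact (Nat.pow_left_injective hd this).symm

end FixedField

section SeventhRadical

variable {k L : Type*} [Field k] [Field L] [Algebra k L] {K : IntermediateField k L} {γ : L}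

theorem natDegree_minpoly_eq_finrank_of_prime (hp : (finrank K L).Prime) (hγ : γ ∉ K) :
    (minpoly K γ).natDegree = finrank K L := by
  have : FiniteDimensional K L := Module.finite_of_finrank_pos hp.pos
  rw [← IntermediateField.adjoin.finrank (IsIntegral.of_finite K γ)]
  rcases (IntermediateField.isSimpleOrder_of_finrank_prime K L hp).eq_bot_or_eq_top
    (IntermediateField.adjoin K {γ}) with h | h
  · obtain ⟨c, hc⟩ := IntermediateField.mem_bot.mp (IntermediateField.adjoin_simple_eq_bot_iff.mp h)
    exact absurd (hc ▸ c.2) hγ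
  · rw [h, IntermediateField.finrank_top']

open Polynomial in
theorem eq_zero_of_add_mul_add_mul_sq (hdeg : 2 < (minpoly K γ).natDegree) {x y z : L}
    (hx : x ∈ K) (hy : y ∈ K) (hz : z ∈ K) (h : x + y * γ + z * γ ^ 2 = 0) :
    x = 0 ∧ y = 0 ∧ z = 0 := by
  lift x to K using hx
  lift y to K using hy
  lift z to K using hz
  set P : K[X] := C x + C y * X + C z * X ^ 2
  have hP : P = 0 := by
    by_contra hP
    have := natDegree_le_natDegree (minpoly.degree_le_of_ne_zero K γ hP (by simpa [P] using h))
    have : P.natDegree ≤ 2 := by simp only [P]; compute_degree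
    omega
  exact ⟨by simpa [P] using congrArg (coeff · 0) hP, by simpa [P] using congrArg (coeff · 1) hP,
    by simpa [P] using congrArg (coeff · 2) hP⟩

theorem pow_notMem_of_coprime {ℓ a : ℕ} (hγ : γ ∉ K) (hℓ : γ ^ ℓ ∈ K) (ha : a.Coprime ℓ) :
    γ ^ a ∉ K := by
  intro hmem
  apply hγ
  have hγ0 : γ ≠ 0 := fun h => hγ (h ▸ K.zero_mem)
  have hbez : (1 : ℤ) = a * Nat.gcdA a ℓ + ℓ * Nat.gcdB a ℓ := by
    rw [← Nat.gcd_eq_gcd_ab, ha, Nat.cast_one]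
  rw [← zpow_one γ, hbez, zpow_add₀ hγ0, zpow_mul, zpow_mul, zpow_natCast, zpow_natCast]
  exact mul_mem (zpow_mem hmem _) (zpow_mem hℓ _)

variable (K) in
structure IsCubicSeventhRadical (γ : L) : Prop where
  finrank_eq : finrank K L = 3
  notMem : γ ∉ K
  pow_seven_mem : γ ^ 7 ∈ K

namespace IsCubicSeventhRadical

theorem ne_zero (hγ : IsCubicSeventhRadical K γ) : γ ≠ 0 :=
  fun h => hγ.notMem (h ▸ K.zero_mem)

theorem two_lt_natDegree_minpoly (hγ : IsCubicSeventhRadical K γ) :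
    2 < (minpoly K γ).natDegree := by
  rw [natDegree_minpoly_eq_finrank_of_prime (hγ.finrank_eq ▸ Nat.prime_three) hγ.notMem,
    hγ.finrank_eq]
  norm_num

theorem pow (hγ : IsCubicSeventhRadical K γ) {a : ℕ} (ha : a.Coprime 7) :
    IsCubicSeventhRadical K (γ ^ a) where
  finrank_eq := hγ.finrank_eq
  notMem := pow_notMem_of_coprime hγ.notMem hγ.pow_seven_mem ha
  pow_seven_mem := by rw [← pow_mul, mul_comm, pow_mul]; exact pow_mem hγ.pow_seven_mem a

/-- Modulo the relation `z γ³ = -y γ - x`, `z³ γ⁷ ∈ K` reduces to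
`-x y² + (z x² - y³) γ + 2xyz γ²`, so both non-constant coefficients vanish. -/
theorem eq_zero_of_add_mul_add_mul_cube (hγ : IsCubicSeventhRadical K γ) (h2 : (2 : L) ≠ 0)
    {x y z : L} (hx : x ∈ K) (hy : y ∈ K) (hz : z ∈ K) (h : x + y * γ + z * γ ^ 3 = 0) :
    x = 0 ∧ y = 0 ∧ z = 0 := by
  have hκ := hγ.pow_seven_mem
  obtain ⟨e0, e1, e2⟩ := eq_zero_of_add_mul_add_mul_sq hγ.two_lt_natDegree_minpoly
    (sub_mem (neg_mem (mul_mem hx (pow_mem hy 2))) (mul_mem (pow_mem hz 3) hκ))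
    (sub_mem (mul_mem hz (pow_mem hx 2)) (pow_mem hy 3))
    (mul_mem (mul_mem (mul_mem (ofNat_mem K 2) hx) hy) hz)
    (show (-(x * y ^ 2) - z ^ 3 * γ ^ 7) + (z * x ^ 2 - y ^ 3) * γ + 2 * x * y * z * γ ^ 2 = 0 by
      linear_combination (-(z ^ 2 * γ ^ 4 - y * z * γ ^ 2 - x * z * γ + y ^ 2)) * h)
  have hz0 : z = 0 := by
    by_contra hz0
    have hxy : x * y = 0 := by simpa [h2, hz0, mul_assoc, mul_comm, mul_left_comm] using e2
    have hy0 : y = 0 := by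
      rcases mul_eq_zero.mp hxy with hx0 | hy0
      · simpa [hx0] using e1
      · exact hy0
    have : z ^ 3 * γ ^ 7 = 0 := by simpa [hy0] using e0
    simp [hz0, hγ.ne_zero] at this
  obtain ⟨hx0, hy0, -⟩ := eq_zero_of_add_mul_add_mul_sq hγ.two_lt_natDegree_minpoly hx hy
    K.zero_mem (by simpa [hz0] using h)
  exact ⟨hx0, hy0, hz0⟩

theorem eq_zero_of_add_mul_add_mul_pow (hγ : IsCubicSeventhRadical K γ) (h2 : (2 : L) ≠ 0)
    {e : ℕ} (he : 2 ≤ e) (he' : e ≤ 6) {x y z : L} (hx : x ∈ K) (hy : y ∈ K) (hz : z ∈ K)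
    (h : x + y * γ + z * γ ^ e = 0) : x = 0 ∧ y = 0 ∧ z = 0 := by
  have hκ := hγ.pow_seven_mem
  have hκ0 : γ ^ 7 ≠ 0 := pow_ne_zero 7 hγ.ne_zero
  interval_cases e
  · exact eq_zero_of_add_mul_add_mul_sq hγ.two_lt_natDegree_minpoly hx hy hz h
  · exact hγ.eq_zero_of_add_mul_add_mul_cube h2 hx hy hz h
  · -- `γ = (γ ^ 4) ^ 2 / γ ^ 7`
    obtain ⟨hx0, hz0, hy0⟩ := eq_zero_of_add_mul_add_mul_sq
      (hγ.pow (a := 4) (by norm_num)).two_lt_natDegree_minpoly hx hz (mul_mem hy (inv_mem hκ))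
      (show x + z * γ ^ 4 + y * (γ ^ 7)⁻¹ * (γ ^ 4) ^ 2 = 0 by
        field_simp; linear_combination h)
    exact ⟨hx0, by simpa [hκ0] using hy0, hz0⟩
  · -- `γ = (γ ^ 5) ^ 3 / (γ ^ 7) ^ 2`
    obtain ⟨hx0, hz0, hy0⟩ := (hγ.pow (a := 5) (by norm_num)).eq_zero_of_add_mul_add_mul_cube h2
      hx hz (mul_mem hy (inv_mem (pow_mem hκ 2)))
      (show x + z * γ ^ 5 + y * ((γ ^ 7) ^ 2)⁻¹ * (γ ^ 5) ^ 3 = 0 by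
        field_simp; linear_combination h)
    exact ⟨hx0, by simpa [hκ0] using hy0, hz0⟩
  · obtain ⟨hz0, hx0, hy0⟩ := eq_zero_of_add_mul_add_mul_sq hγ.two_lt_natDegree_minpoly
      (mul_mem hz hκ) hx hy (show z * γ ^ 7 + x * γ + y * γ ^ 2 = 0 by linear_combination γ * h)
    exact ⟨hx0, hy0, by simpa [hκ0] using hz0⟩

theorem eq_zero_of_mul_pow_add_mul_pow_add_mul_pow (hγ : IsCubicSeventhRadical K γ)
    (h2 : (2 : L) ≠ 0) {a b c : ℕ} (hab : a % 7 ≠ b % 7) (hac : a % 7 ≠ c % 7)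
    (hbc : b % 7 ≠ c % 7) {x y z : L} (hx : x ∈ K) (hy : y ∈ K) (hz : z ∈ K)
    (h : x * γ ^ a + y * γ ^ b + z * γ ^ c = 0) : x = 0 ∧ y = 0 ∧ z = 0 := by
  have hκ := hγ.pow_seven_mem
  have hκ0 : γ ^ 7 ≠ 0 := pow_ne_zero 7 hγ.ne_zero
  set b₁ := (b + 6 * a) % 7
  set c₁ := (c + 6 * a) % 7
  -- Multiplying by `γ ^ (6 * a)` turns the exponents into `0, b₁, c₁` modulo 7; in terms of
  -- `δ = γ ^ b₁` they become `0, 1, e`.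
  obtain ⟨e, he', he, hbe⟩ : ∃ e < 7, 2 ≤ e ∧ b₁ * e % 7 = c₁ := by
    have : ∀ u < 7, ∀ v < 7, u ≠ 0 ∧ v ≠ 0 ∧ u ≠ v → ∃ e < 7, 2 ≤ e ∧ u * e % 7 = v := by
      decide
    exact this b₁ (Nat.mod_lt _ (by norm_num)) c₁ (Nat.mod_lt _ (by norm_num)) (by omega)
  have hδ : IsCubicSeventhRadical K (γ ^ b₁) :=
    hγ.pow (Nat.Coprime.symm ((Nat.Prime.coprime_iff_not_dvd (by norm_num)).mpr (by omega)))
  have hb : γ ^ b * γ ^ (6 * a) = γ ^ b₁ * (γ ^ 7) ^ ((b + 6 * a) / 7) := by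
    rw [← pow_add, ← pow_mul, ← pow_add, Nat.mod_add_div]
  have hc : γ ^ c * γ ^ (6 * a) = γ ^ c₁ * (γ ^ 7) ^ ((c + 6 * a) / 7) := by
    rw [← pow_add, ← pow_mul, ← pow_add, Nat.mod_add_div]
  have hδe : (γ ^ b₁) ^ e = γ ^ c₁ * (γ ^ 7) ^ (b₁ * e / 7) := by
    rw [← pow_mul, ← pow_mul, ← pow_add, ← hbe, Nat.mod_add_div]
  have ha : γ ^ a * γ ^ (6 * a) = (γ ^ 7) ^ a := by rw [← pow_add, ← pow_mul]; ring_nf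
  set s := b₁ * e / 7
  obtain ⟨hx0, hy0, hz0⟩ := hδ.eq_zero_of_add_mul_add_mul_pow h2 he (by omega)
    (mul_mem (mul_mem hx (pow_mem hκ a)) (pow_mem hκ s))
    (mul_mem (mul_mem hy (pow_mem hκ ((b + 6 * a) / 7))) (pow_mem hκ s))
    (mul_mem hz (pow_mem hκ ((c + 6 * a) / 7)))
    (by linear_combination (γ ^ (6 * a) * (γ ^ 7) ^ s) * h - (x * (γ ^ 7) ^ s) * ha
      - (y * (γ ^ 7) ^ s) * hb - (z * (γ ^ 7) ^ s) * hc + (z * (γ ^ 7) ^ ((c + 6 * a) / 7)) * hδe)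
  simp only [mul_eq_zero, pow_eq_zero_iff', hκ0, false_and, or_false] at hx0 hy0 hz0
  exact ⟨hx0, hy0, hz0⟩

theorem not_pow_mul_mem_of_finrank_le_two (hγ : IsCubicSeventhRadical K γ) (h2 : (2 : L) ≠ 0)
    {V : Submodule K L} (hV : finrank K V ≤ 2) {y : L} (hy : y ≠ 0) {a b c : ℕ}
    (hab : a % 7 ≠ b % 7) (hac : a % 7 ≠ c % 7) (hbc : b % 7 ≠ c % 7)
    : ¬(γ ^ a * y ∈ V ∧ γ ^ b * y ∈ V ∧ γ ^ c * y ∈ V) := by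
  rintro ⟨ha, hb, hc⟩
  have hli : LinearIndependent K ![γ ^ a * y, γ ^ b * y, γ ^ c * y] := by
    rw [Fintype.linearIndependent_iff]
    intro g hg
    simp only [Fin.sum_univ_three, Matrix.cons_val, IntermediateField.smul_def] at hg
    obtain ⟨hg0, hg1, hg2⟩ := hγ.eq_zero_of_mul_pow_add_mul_pow_add_mul_pow h2 hab hac hbc
      (g 0).2 (g 1).2 (g 2).2 (mul_right_cancel₀ hy (by linear_combination hg))
    intro i
    fin_cases i
    exacts [Subtype.ext hg0, Subtype.ext hg1, Subtype.ext hg2]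
  have hspan : Submodule.span K (Set.range ![γ ^ a * y, γ ^ b * y, γ ^ c * y]) ≤ V := by
    rw [Submodule.span_le, Set.range_subset_iff]
    intro i
    fin_cases i <;> assumption
  have : FiniteDimensional K L := Module.finite_of_finrank_pos (by simp [hγ.finrank_eq])
  have := Submodule.finrank_mono hspan
  rw [finrank_span_eq_card hli, Fintype.card_fin] at this
  omega

theorem finrank_inf_comap_mulLeft_pow (hγ : IsCubicSeventhRadical K γ) (h2 : (2 : L) ≠ 0)
    {V : Submodule K L} (hV : finrank K V = 2) {d : ℕ} (hd : d % 7 ≠ 0) :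
    finrank K ↥(V ⊓ V.comap (LinearMap.mulLeft K (γ ^ d))) = 1 := by
  have : FiniteDimensional K L := Module.finite_of_finrank_pos (by simp [hγ.finrank_eq])
  have hγd : γ ^ d ≠ 0 := pow_ne_zero d hγ.ne_zero
  set C := V.comap (LinearMap.mulLeft K (γ ^ d))
  have hC : finrank K C = 2 := by
    let e := LinearEquiv.ofBijective (LinearMap.mulLeft K (γ ^ d))
      ⟨mul_right_injective₀ hγd, fun y => ⟨(γ ^ d)⁻¹ * y, by simp [hγd]⟩⟩
    rw [← hV, show C = V.comap e.toLinearMap from rfl, Submodule.comap_equiv_eq_map_symm,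
      LinearEquiv.finrank_map_eq]
  have hsup := Submodule.finrank_sup_add_finrank_inf_eq V C
  have hle := Submodule.finrank_le (V ⊔ C)
  rw [hγ.finrank_eq] at hle
  refine le_antisymm ?_ (by omega)
  by_contra hlt
  have hVC : V ≤ C := inf_eq_left.mp
    (Submodule.eq_of_le_of_finrank_le inf_le_left (by rw [hV]; omega))
  obtain ⟨x, hxV, hx0⟩ := Submodule.exists_mem_ne_zero_of_ne_bot
    (Submodule.one_le_finrank_iff.mp (by rw [hV]; norm_num))
  have h1 : γ ^ d * x ∈ V := hVC hxV
  have h2' : γ ^ (2 * d) * x ∈ V := by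
    rw [two_mul, pow_add, mul_assoc]
    exact hVC h1
  exact hγ.not_pow_mul_mem_of_finrank_le_two h2 hV.le hx0 (a := 0) (b := d) (c := 2 * d)
    (by omega) (by omega) (by omega) ⟨by simpa using hxV, h1, h2'⟩

end IsCubicSeventhRadical

end SeventhRadical

theorem sum_range_mul_eq_sum_sum {R : Type*} [AddCommMonoid R] (h : ℕ → R) (a N : ℕ) :
    ∑ m ∈ range (a * N), h m = ∑ i ∈ range N, ∑ j ∈ range a, h (i + j * N) := by
  rw [Finset.sum_comm]
  induction a with
  | zero => simp
  | succ a ih =>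
    rw [add_mul, one_mul, Finset.sum_range_add, ih, Finset.sum_range_succ]
    simp only [add_comm]

theorem Function.Periodic.sum_range_add {R : Type*} [AddCommMonoid R] [IsCancelAdd R]
    {g : ℕ → R} {a : ℕ} (hg : Function.Periodic g a) (j : ℕ) :
    ∑ d ∈ range a, g (j + d) = ∑ d ∈ range a, g d := by
  induction j with
  | zero => simp
  | succ j ih =>
    rw [← ih]
    apply add_right_cancel (b := g j)
    calc ∑ d ∈ range a, g (j + 1 + d) + g j = ∑ d ∈ range (a + 1), g (j + d) := by
          rw [Finset.sum_range_succ']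
          simp only [add_assoc, add_comm 1, add_zero]
      _ = ∑ d ∈ range a, g (j + d) + g j := by rw [Finset.sum_range_succ, hg]

theorem sum_range_sq_sum_eq_sum_sum_mul {R : Type*} [CommSemiring R] [IsCancelAdd R]
    {f : ℕ → R} {a N : ℕ} (hf : Function.Periodic f (a * N)) :
    ∑ i ∈ range N, (∑ j ∈ range a, f (i + j * N)) ^ 2 =
      ∑ d ∈ range a, ∑ m ∈ range (a * N), f m * f (m + d * N) := by
  have hper (i : ℕ) : Function.Periodic (fun u => f (i + u * N)) a := fun u => by
    simp only [add_mul, ← add_assoc, hf _]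
  symm
  calc ∑ d ∈ range a, ∑ m ∈ range (a * N), f m * f (m + d * N)
      = ∑ i ∈ range N, ∑ j ∈ range a, f (i + j * N) * ∑ d ∈ range a, f (i + (j + d) * N) := by
        simp_rw [sum_range_mul_eq_sum_sum _ a N, Finset.mul_sum, add_mul, add_assoc]
        rw [Finset.sum_comm]
        exact Finset.sum_congr rfl fun i _ => Finset.sum_comm
    _ = ∑ i ∈ range N, (∑ j ∈ range a, f (i + j * N)) ^ 2 := by
        simp_rw [(hper _).sum_range_add, sq, Finset.sum_mul]

theorem image_range_eq_of_sum_sq {n : ℕ → ℕ} {N s : ℕ} (hle : ∀ i < N, n i ≤ 2)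
    (h1 : ∑ i ∈ range N, n i = s) (h2 : ∑ i ∈ range N, n i ^ 2 = s + 6) (hs : s ≠ 6)
    (hsN : s < N) : (range N).image n = {0, 1, 2} := by
  ext v
  simp only [mem_image, mem_range, mem_insert, mem_singleton]
  constructor
  · rintro ⟨i, hi, rfl⟩
    have := hle i hi
    omega
  rintro (rfl | rfl | rfl) <;> by_contra! hv
  · have := Finset.card_nsmul_le_sum (range N) n 1 fun i hi =>
      Nat.one_le_iff_ne_zero.mpr (hv i (mem_range.mp hi))
    simp only [card_range, smul_eq_mul, mul_one, h1] at this
    omega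
  · have : ∑ i ∈ range N, n i ^ 2 = ∑ i ∈ range N, 2 * n i := Finset.sum_congr rfl fun i hi => by
      have := hle i (mem_range.mp hi); have := hv i (mem_range.mp hi)
      interval_cases n i <;> simp_all
    rw [← Finset.mul_sum, h1, h2] at this
    omega
  · have : ∑ i ∈ range N, n i ^ 2 = ∑ i ∈ range N, n i := Finset.sum_congr rfl fun i hi => by
      have := hle i (mem_range.mp hi); have := hv i (mem_range.mp hi)
      interval_cases n i <;> simp_all
    omega

section PrimitiveElement

variable {k F : Type*} [Field k] [Field F] [Algebra k F]

theorem orderOf_eq_natCard_sub_one [Finite F] {ω : F} (hω0 : ω ≠ 0)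
    (hω : ∀ x : F, x ≠ 0 → ∃ m : ℕ, ω ^ m = x) : orderOf ω = Nat.card F - 1 := by
  rw [← Nat.card_units, show ω = (Units.mk0 ω hω0 : F) from rfl, orderOf_units]
  refine orderOf_eq_card_of_forall_mem_zpowers fun u => ?_
  obtain ⟨m, hm⟩ := hω u u.ne_zero
  exact ⟨m, Units.ext (by simpa using hm)⟩

theorem pow_mem_iff_dvd {K : IntermediateField k F} {q : ℕ} (hK : ∀ x, x ∈ K ↔ x ^ q = x)
    {ω : F} (hω0 : ω ≠ 0) (hord : orderOf ω = q ^ 3 - 1) (hq : 1 < q) (m : ℕ) :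
    ω ^ m ∈ K ↔ q ^ 2 + q + 1 ∣ m := by
  have hq3 : q ^ 3 - 1 = (q ^ 2 + q + 1) * (q - 1) := by
    zify [hq.le, Nat.one_le_pow 3 q (by omega)]
    ring
  have hmq : ω ^ m * ω ^ (m * (q - 1)) = ω ^ (m * q) := by
    rw [← pow_add]
    congr 1
    zify [hq.le]
    ring
  rw [hK, ← pow_mul, ← hmq, mul_eq_left₀ (pow_ne_zero m hω0), ← orderOf_dvd_iff_pow_eq_one, hord,
    hq3, Nat.mul_dvd_mul_iff_right (by omega)]

theorem ne_zero_of_forall_exists_pow_eq {ω x : F} (hx0 : x ≠ 0) (hx1 : x ≠ 1)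
    (hω : ∀ y : F, y ≠ 0 → ∃ m : ℕ, ω ^ m = y) : ω ≠ 0 := by
  rintro rfl
  obtain ⟨m, hm⟩ := hω x hx0
  rcases m with _ | m
  · exact hx1 (by simpa using hm.symm)
  · exact hx0 (by simpa using hm.symm)

end PrimitiveElement

section ProjectiveIndex

variable {k : Type*} {F : Type} [Field k] [Field F] [Algebra k F] {K : IntermediateField k F}
  {ω : F} {M : ℕ}

theorem modEq_of_pow_eq (hω0 : ω ≠ 0) (hωK : ∀ m, ω ^ m ∈ K ↔ M ∣ m) {a b : ℕ}
    (h : ω ^ a = ω ^ b) : a ≡ b [MOD M] := by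
  wlog hab : a ≤ b generalizing a b
  · exact (this h.symm (le_of_not_ge hab)).symm
  have h1 : ω ^ (b - a) = 1 := mul_left_cancel₀ (pow_ne_zero a hω0) (by
    rw [← pow_add, Nat.add_sub_cancel' hab, mul_one, h])
  exact (Nat.modEq_iff_dvd' hab).mpr ((hωK _).mp (h1 ▸ K.one_mem))

theorem exists_eq_pow_mul_of_mem (hω : ∀ x : F, x ≠ 0 → ∃ m : ℕ, ω ^ m = x)
    (hωK : ∀ m, ω ^ m ∈ K ↔ M ∣ m) {t : F} (ht : t ∈ K) (ht0 : t ≠ 0) : ∃ s, t = ω ^ (M * s) := by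
  obtain ⟨u, rfl⟩ := hω t ht0
  obtain ⟨s, rfl⟩ := (hωK u).mp ht
  exact ⟨s, rfl⟩

theorem pow_mul_mem_cycClass_iff (hω0 : ω ≠ 0) (hω : ∀ x : F, x ≠ 0 → ∃ m : ℕ, ω ^ m = x)
    (hωK : ∀ m, ω ^ m ∈ K ↔ M ∣ m) {N i : ℕ} (hNM : N ∣ M) (hi : i < N) {m : ℕ} {t : F}
    (ht : t ∈ K) (ht0 : t ≠ 0) : ω ^ m * t ∈ cycClass ω N i ↔ m % N = i := by
  obtain ⟨s, rfl⟩ := exists_eq_pow_mul_of_mem hω hωK ht ht0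
  obtain ⟨c, rfl⟩ := hNM
  simp only [cycClass, Set.mem_ofPred_eq, ← pow_mul, ← pow_add]
  constructor
  · rintro ⟨k, hk⟩
    have := (modEq_of_pow_eq hω0 hωK hk).of_mul_right c
    simpa [Nat.ModEq, mul_assoc, Nat.add_mul_mod_self_left, Nat.mod_eq_of_lt hi] using this
  · intro hm
    refine ⟨m / N + c * s, ?_⟩
    rw [← hm, mul_add, ← add_assoc, Nat.mod_add_div, mul_assoc]

variable [Fintype F] [Fintype K]

theorem sum_ne_zero_eq_sum_pow_mul {R : Type*} [AddCommMonoid R] (g : F → R) (hM : 0 < M)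
    (hω0 : ω ≠ 0) (hω : ∀ x : F, x ≠ 0 → ∃ m : ℕ, ω ^ m = x) (hωK : ∀ m, ω ^ m ∈ K ↔ M ∣ m) :
    ∑ x ∈ univ.erase 0, g x = ∑ m ∈ range M, ∑ t ∈ (univ : Finset K).erase 0, g (ω ^ m * t) := by
  rw [← Finset.sum_product']
  symm
  refine Finset.sum_bij (fun mt _ => ω ^ mt.1 * mt.2) ?_ ?_ ?_ (fun _ _ => rfl)
  · rintro ⟨m, t⟩ hmt
    simp only [mem_product, mem_erase, mem_univ, and_true] at hmt
    exact mem_erase.mpr ⟨mul_ne_zero (pow_ne_zero _ hω0) (by simpa using hmt.2), mem_univ _⟩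
  · rintro ⟨m, t⟩ hmt ⟨m', t'⟩ hmt' h
    simp only [mem_product, mem_range, mem_erase, mem_univ, and_true] at hmt hmt'
    obtain ⟨s, hs⟩ := exists_eq_pow_mul_of_mem hω hωK t.2 (by simpa using hmt.2)
    obtain ⟨s', hs'⟩ := exists_eq_pow_mul_of_mem hω hωK t'.2 (by simpa using hmt'.2)
    have hmod := modEq_of_pow_eq hω0 hωK (show ω ^ (m + M * s) = ω ^ (m' + M * s') by
      rw [pow_add, pow_add, ← hs, ← hs', h])
    have hmm : m = m' := by
      simpa [Nat.ModEq, Nat.add_mul_mod_self_left, Nat.mod_eq_of_lt hmt.1,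
        Nat.mod_eq_of_lt hmt'.1] using hmod
    subst hmm
    simpa [hω0] using h
  · intro x hx
    obtain ⟨u, rfl⟩ := hω x (ne_of_mem_erase hx)
    refine ⟨(u % M, ⟨ω ^ (M * (u / M)), (hωK _).mpr (dvd_mul_right _ _)⟩), ?_, ?_⟩
    · simp only [mem_product, mem_range, mem_erase, mem_univ, and_true, Nat.mod_lt _ hM,
        true_and, ne_eq, Subtype.ext_iff]
      exact pow_ne_zero _ hω0
    · simp only [← pow_add, Nat.mod_add_div]

theorem card_filter_pow_mem_mul (V : Submodule K F) (hM : 0 < M) (hω0 : ω ≠ 0)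
    (hω : ∀ x : F, x ≠ 0 → ∃ m : ℕ, ω ^ m = x) (hωK : ∀ m, ω ^ m ∈ K ↔ M ∣ m) :
    #{m ∈ range M | ω ^ m ∈ V} * (Fintype.card K - 1) = Nat.card V - 1 := by
  have h := sum_ne_zero_eq_sum_pow_mul (fun x => if x ∈ V then 1 else 0) hM hω0 hω hωK
  have hV : ∑ x ∈ univ.erase (0 : F), (if x ∈ V then 1 else 0) = Nat.card V - 1 := by
    rw [Finset.sum_boole, Nat.cast_id, Finset.filter_erase, Finset.card_erase_of_mem
      (mem_filter.mpr ⟨mem_univ _, V.zero_mem⟩), Nat.card_eq_fintype_card, Fintype.card_subtype]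
  have hmul (m : ℕ) (t : K) (ht : t ∈ (univ : Finset K).erase 0) :
      (if ω ^ m * t ∈ V then 1 else 0) = if ω ^ m ∈ V then 1 else 0 := by
    rw [mul_comm, show (t : F) * ω ^ m = t • ω ^ m from rfl,
      Submodule.smul_mem_iff _ (ne_of_mem_erase ht)]
  simp only [hV, Finset.sum_congr rfl (hmul _), Finset.sum_const, card_erase_of_mem (mem_univ _),
    card_univ, smul_eq_mul] at h
  rw [h, Finset.card_filter, Finset.sum_mul]
  exact Finset.sum_congr rfl fun m _ => mul_comm _ _

theorem psiSum_cycClass (ψ : F → ℂ) (hM : 0 < M) (hω0 : ω ≠ 0)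
    (hω : ∀ x : F, x ≠ 0 → ∃ m : ℕ, ω ^ m = x) (hωK : ∀ m, ω ^ m ∈ K ↔ M ∣ m) {N i : ℕ}
    (hNM : N ∣ M) (hi : i < N) :
    psiSum ψ (cycClass ω N i) = ∑ m ∈ range M,
      if m % N = i then ∑ t ∈ (univ : Finset K).erase 0, ψ (ω ^ m * t) else 0 := by
  have hC : (cycClass ω N i).toFinset = (univ.erase 0).filter (· ∈ cycClass ω N i) := by
    ext x
    simp only [Set.mem_toFinset, mem_filter, mem_erase, mem_univ, and_true, iff_and_self]
    rintro ⟨k, rfl⟩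
    exact mul_ne_zero (pow_ne_zero _ hω0) (pow_ne_zero _ (pow_ne_zero _ hω0))
  rw [psiSum, hC, Finset.sum_filter, sum_ne_zero_eq_sum_pow_mul _ hM hω0 hω hωK]
  refine Finset.sum_congr rfl fun m _ => ?_
  have hmem (t : K) (ht : t ∈ (univ : Finset K).erase 0) :=
    pow_mul_mem_cycClass_iff hω0 hω hωK hNM hi (m := m) t.2 (by simpa using ne_of_mem_erase ht)
  split_ifs with hm
  · exact Finset.sum_congr rfl fun t ht => if_pos ((hmem t ht).mpr hm)
  · exact Finset.sum_eq_zero fun t ht => if_neg ((hmem t ht).not.mpr hm)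

end ProjectiveIndex

section ClassCount

variable {k : Type*} {F : Type} [Field k] [Field F] [Algebra k F] {K : IntermediateField k F}
  {ω : F} {N : ℕ}

noncomputable def classCount (V : Submodule K F) (ω : F) (N i : ℕ) : ℕ :=
  #{j ∈ range 7 | ω ^ (i + j * N) ∈ V}

theorem sum_classCount (V : Submodule K F) :
    ∑ i ∈ range N, classCount V ω N i = #{m ∈ range (7 * N) | ω ^ m ∈ V} := by
  simp only [classCount, card_filter, sum_range_mul_eq_sum_sum _ 7 N]

theorem sum_classCount_sq (hω0 : ω ≠ 0) (hωK : ∀ m, ω ^ m ∈ K ↔ 7 * N ∣ m) (V : Submodule K F) :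
    ∑ i ∈ range N, classCount V ω N i ^ 2 =
      ∑ d ∈ range 7, #{m ∈ range (7 * N) | ω ^ m ∈ V ∧ ω ^ (m + d * N) ∈ V} := by
  have hper : Function.Periodic (fun m => if ω ^ m ∈ V then 1 else 0) (7 * N) := fun m => by
    have hκ : ω ^ (7 * N) ∈ K := (hωK _).mpr dvd_rfl
    simp only [pow_add, mul_comm (ω ^ m), show ω ^ (7 * N) * ω ^ m =
      (⟨_, hκ⟩ : K) • ω ^ m from rfl, Submodule.smul_mem_iff _
        (show (⟨_, hκ⟩ : K) ≠ 0 from fun h => pow_ne_zero _ hω0 (congrArg Subtype.val h))]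
  simp only [classCount, card_filter, sum_range_sq_sum_eq_sum_sum_mul hper, ite_zero_mul_ite_zero,
    mul_one]

theorem classCount_le_two (hγ : IsCubicSeventhRadical K (ω ^ N)) (h2 : (2 : F) ≠ 0) (hω0 : ω ≠ 0)
    {V : Submodule K F} (hV : finrank K V ≤ 2) (i : ℕ) : classCount V ω N i ≤ 2 := by
  by_contra! h3
  obtain ⟨a, ha, b, hb, c, hc, hab, hac, hbc⟩ := Finset.two_lt_card.mp h3
  simp only [mem_filter, mem_range] at ha hb hc
  have hmem {j : ℕ} (hj : ω ^ (i + j * N) ∈ V) : (ω ^ N) ^ j * ω ^ i ∈ V := by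
    rwa [← pow_mul, ← pow_add, add_comm, mul_comm]
  exact hγ.not_pow_mul_mem_of_finrank_le_two h2 hV (pow_ne_zero i hω0)
    (by omega) (by omega) (by omega) ⟨hmem ha.2, hmem hb.2, hmem hc.2⟩

variable [Fintype F] [Fintype K]

theorem card_filter_pow_mem_and_pow_add_mem (hγ : IsCubicSeventhRadical K (ω ^ N))
    (h2 : (2 : F) ≠ 0) (hN : 0 < N) (hω0 : ω ≠ 0) (hω : ∀ x : F, x ≠ 0 → ∃ m : ℕ, ω ^ m = x)
    (hωK : ∀ m, ω ^ m ∈ K ↔ 7 * N ∣ m) {V : Submodule K F} (hV : finrank K V = 2) {d : ℕ}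
    (hd : d % 7 ≠ 0) : #{m ∈ range (7 * N) | ω ^ m ∈ V ∧ ω ^ (m + d * N) ∈ V} = 1 := by
  set U := V ⊓ V.comap (LinearMap.mulLeft K ((ω ^ N) ^ d))
  have hU : Nat.card U = Fintype.card K := by
    rw [Module.natCard_eq_pow_finrank (K := K), hγ.finrank_inf_comap_mulLeft_pow h2 hV hd, pow_one,
      Nat.card_eq_fintype_card]
  have hcount := card_filter_pow_mem_mul U (by omega) hω0 hω hωK
  have hfilter : {m ∈ range (7 * N) | ω ^ m ∈ V ∧ ω ^ (m + d * N) ∈ V} =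
      {m ∈ range (7 * N) | ω ^ m ∈ U} := by
    refine Finset.filter_congr fun m _ => ?_
    rw [Submodule.mem_inf, Submodule.mem_comap, LinearMap.mulLeft_apply, ← pow_mul, ← pow_add,
      add_comm (N * d), mul_comm N]
  rw [hfilter]
  have := Fintype.one_lt_card (α := K)
  rw [hU] at hcount
  exact Nat.eq_of_mul_eq_mul_right (by omega) (hcount.trans (one_mul _).symm)

theorem sum_classCount_sq_eq_add_six (hγ : IsCubicSeventhRadical K (ω ^ N)) (h2 : (2 : F) ≠ 0)
    (hN : 0 < N) (hω0 : ω ≠ 0) (hω : ∀ x : F, x ≠ 0 → ∃ m : ℕ, ω ^ m = x)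
    (hωK : ∀ m, ω ^ m ∈ K ↔ 7 * N ∣ m) {V : Submodule K F} (hV : finrank K V = 2) :
    ∑ i ∈ range N, classCount V ω N i ^ 2 = ∑ i ∈ range N, classCount V ω N i + 6 := by
  rw [sum_classCount_sq hω0 hωK, sum_range_succ', sum_classCount,
    Finset.sum_congr rfl fun d hd => card_filter_pow_mem_and_pow_add_mem hγ h2 hN hω0 hω hωK hV
      (d := d + 1) (by have := mem_range.mp hd; omega)]
  simp [add_comm]

end ClassCount

theorem finrank_ker_trace_add_one {K L : Type*} [Field K] [Field L] [Algebra K L]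
    [FiniteDimensional K L] [Algebra.IsSeparable K L] :
    finrank K (LinearMap.ker (Algebra.trace K L)) + 1 = finrank K L := by
  rw [← LinearMap.finrank_range_add_finrank_ker (Algebra.trace K L), add_comm,
    LinearMap.range_eq_top.mpr (Algebra.trace_surjective K L), finrank_top, finrank_self]

theorem psiSum_canonPsi_cycClass {p : ℕ} [Fact p.Prime] {F : Type} [Field F] [Fintype F]
    [Algebra (ZMod p) F] {K : IntermediateField (ZMod p) F} [Fintype K] {ω : F} {N i : ℕ}
    (hN : 0 < N) (hω0 : ω ≠ 0) (hω : ∀ x : F, x ≠ 0 → ∃ m : ℕ, ω ^ m = x)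
    (hωK : ∀ m, ω ^ m ∈ K ↔ 7 * N ∣ m) (hi : i < N) :
    psiSum (canonPsi p F) (cycClass ω N i) =
      -7 + Fintype.card K * classCount (LinearMap.ker (Algebra.trace K F)) ω N i := by
  have hK (m : ℕ) : ∑ t ∈ (univ : Finset K).erase 0, canonPsi p F (ω ^ m * t) =
      (if ω ^ m ∈ LinearMap.ker (Algebra.trace K F) then (Fintype.card K : ℂ) else 0) - 1 := by
    rw [Finset.sum_erase_eq_sub (mem_univ _), sum_canonPsi_mul, LinearMap.mem_ker]
    simp [canonPsi_eq_stdAddChar]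
  rw [psiSum_cycClass _ (by omega) hω0 hω hωK (dvd_mul_left N 7) hi]
  simp_rw [hK]
  rw [sum_range_mul_eq_sum_sum, Finset.sum_comm]
  have hclass (g : ℕ → ℂ) (j : ℕ) :
      ∑ x ∈ range N, (if (x + j * N) % N = i then g (x + j * N) else 0) = g (i + j * N) := by
    rw [Finset.sum_congr rfl fun x hx => by
      rw [Nat.add_mul_mod_self_right, Nat.mod_eq_of_lt (mem_range.mp hx)],
      Finset.sum_ite_eq', if_pos (mem_range.mpr hi)]
  rw [Finset.sum_congr rfl fun j _ => hclass (fun m =>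
    (if ω ^ m ∈ LinearMap.ker (Algebra.trace K F) then (Fintype.card K : ℂ) else 0) - 1) j]
  simp_rw [Finset.sum_sub_distrib, ← Finset.sum_filter, Finset.sum_const, classCount,
    card_range, nsmul_eq_mul]
  ring

theorem image_classCount_ker_trace {k : Type*} {F : Type} [Field k] [Field F] [Fintype F]
    [Algebra k F] {K : IntermediateField k F} [Fintype K] (h3 : finrank K F = 3)
    (h2 : (2 : F) ≠ 0) {q N : ℕ} (hKq : Fintype.card K = q) (hN : 7 * N = q ^ 2 + q + 1)
    (hq : 9 ≤ q) {ω : F} (hω0 : ω ≠ 0) (hω : ∀ x : F, x ≠ 0 → ∃ m : ℕ, ω ^ m = x)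
    (hωK : ∀ m, ω ^ m ∈ K ↔ 7 * N ∣ m) :
    (range N).image (classCount (LinearMap.ker (Algebra.trace K F)) ω N) = {0, 1, 2} := by
  have hN0 : 0 < N := by nlinarith
  have hγ : IsCubicSeventhRadical K (ω ^ N) :=
    ⟨h3, (hωK N).not.mpr (Nat.not_dvd_of_pos_of_lt hN0 (by omega)),
      by rw [← pow_mul, mul_comm]; exact (hωK _).mpr dvd_rfl⟩
  have hW : finrank K (LinearMap.ker (Algebra.trace K F)) = 2 := by
    have := finrank_ker_trace_add_one (K := K) (L := F)
    omega
  have hsum : ∑ i ∈ range N, classCount (LinearMap.ker (Algebra.trace K F)) ω N i = q + 1 := by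
    have h := card_filter_pow_mem_mul (LinearMap.ker (Algebra.trace K F)) (by omega) hω0 hω hωK
    rw [← sum_classCount, Module.natCard_eq_pow_finrank (K := K), hW, Nat.card_eq_fintype_card,
      hKq] at h
    refine Nat.eq_of_mul_eq_mul_right (by omega : 0 < q - 1) (h.trans ?_)
    zify [show 1 ≤ q by omega, show 1 ≤ q ^ 2 by nlinarith]
    ring
  exact image_range_eq_of_sum_sq (fun i _ => classCount_le_two hγ h2 hω0 hW.le i) hsum
    (by rw [sum_classCount_sq_eq_add_six hγ h2 hN0 hω0 hω hωK hW, hsum]) (by omega) (by nlinarith)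

theorem setOf_exists_lt_eq_of_image_eq {R : Type*} [CommSemiring R] {f : ℕ → R} {c : ℕ → ℕ}
    {N : ℕ} {a b : R} (hf : ∀ i < N, f i = a + b * c i) (hc : (range N).image c = {0, 1, 2}) :
    {v | ∃ i < N, f i = v} = {a + 2 * b, a + b, a} := by
  have hset : {v | ∃ i < N, f i = v} = (fun n : ℕ => a + b * n) '' ↑((range N).image c) := by
    ext v
    simp only [Set.mem_ofPred_eq, coe_image, coe_range, Set.mem_image, Set.mem_Iio,
      exists_exists_and_eq_and]
    exact exists_congr fun i => and_congr_right fun hi => by rw [hf i hi]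
  rw [hset, hc]
  ext v
  simp only [coe_insert, coe_singleton, Set.image_insert_eq, Set.image_singleton, Nat.cast_ofNat,
    Nat.cast_one, Nat.cast_zero, mul_one, mul_zero, add_zero, Set.mem_insert_iff,
    Set.mem_singleton_iff, mul_comm b 2]
  tauto

theorem stmt6_general (p n q N : ℕ) [Fact p.Prime] (hq : q = p ^ n)
    (hodd : Odd q) (hq7 : q % 7 = 2 ∨ q % 7 = 4) (hN : N = (q ^ 2 + q + 1) / 7)
    (F : Type) [Field F] [Fintype F] [Algebra (ZMod p) F]
    (hF : Fintype.card F = q ^ 3)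
    (ω : F) (hω : ∀ x : F, x ≠ 0 → ∃ k : ℕ, ω ^ k = x) :
    {v : ℂ | ∃ i < N, psiSum (canonPsi p F) (cycClass ω N i) = v}
      = {(-7 + 2 * (q : ℂ)), (-7 + (q : ℂ)), (-7 : ℂ)} := by
  have h7N : 7 * N = q ^ 2 + q + 1 := by
    rw [hN, Nat.mul_div_cancel']
    rcases hq7 with h | h <;> simp [Nat.dvd_iff_mod_eq_zero, Nat.add_mod, Nat.pow_mod, h]
  have h9 : 9 ≤ q := by have := Nat.odd_iff.mp hodd; omega
  have hn0 : n ≠ 0 := by rintro rfl; rw [pow_zero] at hq; omega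
  have h2 : (2 : F) ≠ 0 := two_ne_zero_of_odd ((Nat.odd_pow_iff hn0).mp (hq ▸ hodd))
  have hω0 : ω ≠ 0 :=
    ne_zero_of_forall_exists_pow_eq h2 (fun h => one_ne_zero (by linear_combination h)) hω
  have hFcard : Nat.card F = (p ^ n) ^ 3 := by rw [Nat.card_eq_fintype_card, hF, hq]
  have hKq : Fintype.card (frobPowFixedField p n F) = q := by
    rw [← Nat.card_eq_fintype_card, natCard_frobPowFixedField hn0 (by norm_num) hFcard, hq]
  have hωK : ∀ m, ω ^ m ∈ frobPowFixedField p n F ↔ 7 * N ∣ m := h7N ▸ pow_mem_iff_dvd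
    (fun x => hq ▸ mem_frobPowFixedField_iff) hω0
    (by rw [orderOf_eq_natCard_sub_one hω0 hω, Nat.card_eq_fintype_card, hF]) (by omega)
  exact setOf_exists_lt_eq_of_image_eq
    (fun i hi => hKq ▸ psiSum_canonPsi_cycClass (by omega) hω0 hω hωK hi)
    (image_classCount_ker_trace (finrank_frobPowFixedField hn0 hFcard) h2 hKq h7N h9 hω0 hω hωK)

/-- Let `q` be an odd prime power with `q ≡ 2` or `4 (mod 7)` and
`N = (q²+q+1)/7`. Then the Gauss periods `ψ_{F_{q³}}(C_i^{(N,q³)})`, `i = 0,…,N-1`,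
take exactly the three values `-7+2q`, `-7+q`, `-7`. -/
theorem stmt6 (p n q N : ℕ) [Fact p.Prime] (hq : q = p ^ n) (hn : 0 < n)
    (hodd : Odd q) (hq7 : q % 7 = 2 ∨ q % 7 = 4) (hN : N = (q ^ 2 + q + 1) / 7)
    (F : Type) [Field F] [Fintype F] [Algebra (ZMod p) F]
    (hF : Fintype.card F = q ^ 3)
    (ω : F) (hω : ∀ x : F, x ≠ 0 → ∃ k : ℕ, ω ^ k = x) :
    {v : ℂ | ∃ i < N, psiSum (canonPsi p F) (cycClass ω N i) = v}
      = {(-7 + 2 * (q : ℂ)), (-7 + (q : ℂ)), (-7 : ℂ)} :=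
  stmt6_general p n q N hq hodd hq7 hN F hF ω hω
end

section
/- Let q be an odd prime power with q ≡ 2 or 4 (mod 7), let ω be a primitive element of F_{q³}, and set N = (q²+q+1)/7. Then for all distinct j₁, j₂, j₃ ∈ {0,1,…,6}, the elements ω^{j₁N}, ω^{j₂N}, ω^{j₃N} of F_{q³} are linearly independent over F_q. -/
/-!
Put `z = ω ^ N`. Since `7 N (q - 1) = q³ - 1`, `z ^ 7 = ω ^ (q² + q + 1)` is the norm of `ω`, so it
lies in `F_q`, while `z` itself does not; hence `1, z, z²` is a basis of `F_{q³}` over `F_q`.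
Reading exponents modulo 7, the family `i ↦ z ^ i` is permuted up to nonzero scalars by
multiplication by `z` (translation `i ↦ i + 1`) and by a power of Frobenius `x ↦ x ^ Q` with
`Q ≡ 2 (mod 7)` (doubling `i ↦ 2 i`). These generate a group of order 21 with three orbits on
the 3-subsets of `ZMod 7`, represented by `{0,1,2}`, `{0,1,3}` and `{0,2,3}`. The first is the
basis; for the other two, substituting a relation `z³ = a + b z` or `z³ = a + b z²` into
`z ^ 7 ∈ F_q` and comparing coefficients in the basis gives `a b = 0` (as `2 ≠ 0`, `q` being
odd) and then `a = b = 0`, i.e. `z³ = 0`.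
-/

open Set

theorem LinearIndepOn.of_image_of_map_eq_smul {ι R M : Type*} [Field R] [AddCommGroup M]
    [Module R M] {v : ι → M} {φ : ι → ι} {s : Set ι} (f : M →ₗ[R] M) (c : ι → R)
    (hc : ∀ i, c i ≠ 0) (hf : ∀ i, f (v i) = c i • v (φ i)) (hφ : InjOn φ s)
    (h : LinearIndepOn R v (φ '' s)) : LinearIndepOn R v s := by
  have hcv : LinearIndepOn R (fun i ↦ c i • v (φ i)) s :=
    (h.comp_of_image hφ).units_smul fun i ↦ Units.mk0 (c i) (hc i)
  exact .of_comp f (hcv.congr fun i _ ↦ (hf i).symm)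

theorem linearIndepOn_triple_iff {ι R M : Type*} [Ring R] [AddCommGroup M] [Module R M]
    {v : ι → M} {i j k : ι} (hij : i ≠ j) (hik : i ≠ k) (hjk : j ≠ k) :
    LinearIndepOn R v {i, j, k} ↔ LinearIndependent R ![v i, v j, v k] := by
  have hinj : Function.Injective ![i, j, k] := by
    intro a b hab
    fin_cases a <;> fin_cases b <;> simp_all [eq_comm]
  have hrange : range ![i, j, k] = {i, j, k} := by
    rw [Matrix.range_cons, Matrix.range_cons, Matrix.range_cons, Matrix.range_empty, union_empty,
      ← insert_eq, ← insert_eq]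
  rw [← hrange, linearIndepOn_range_iff hinj]
  congr!
  ext a
  fin_cases a <;> rfl

section CyclicPowers

variable {K F : Type*} [Field K] [Field F] [Algebra K F] {z : F} {s d : K} {m r : ℕ}

theorem pow_eq_smul_pow_val (hs : z ^ m = algebraMap K F s) (a : ℕ) :
    z ^ a = s ^ (a / m) • z ^ (a : ZMod m).val := by
  rw [ZMod.val_natCast, Algebra.smul_def, map_pow, ← hs, ← pow_mul, ← pow_add, Nat.div_add_mod]

variable [NeZero m] (hz : z ≠ 0) (hs : z ^ m = algebraMap K F s)
include hz hs

theorem linearIndepOn_of_image_add (b : ZMod m) {t : Set (ZMod m)}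
    (h : LinearIndepOn K (fun i : ZMod m ↦ z ^ i.val) ((· + b) '' t)) :
    LinearIndepOn K (fun i : ZMod m ↦ z ^ i.val) t := by
  have hs0 : s ≠ 0 := by rintro rfl; exact pow_ne_zero m hz (by simpa using hs)
  refine h.of_image_of_map_eq_smul (LinearMap.mulRight K (z ^ b.val))
    (fun i ↦ s ^ ((i.val + b.val) / m)) (fun i ↦ pow_ne_zero _ hs0) (fun i ↦ ?_)
    (add_left_injective b).injOn
  rw [LinearMap.mulRight_apply, ← pow_add, pow_eq_smul_pow_val hs]
  push_cast
  simp only [ZMod.natCast_val, ZMod.cast_id', id_eq]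

theorem linearIndepOn_of_image_mul (τ : F →ₐ[K] F) (hτ : τ z = d • z ^ r)
    (hr : IsUnit (r : ZMod m)) {t : Set (ZMod m)}
    (h : LinearIndepOn K (fun i : ZMod m ↦ z ^ i.val) ((r * ·) '' t)) :
    LinearIndepOn K (fun i : ZMod m ↦ z ^ i.val) t := by
  have hs0 : s ≠ 0 := by rintro rfl; exact pow_ne_zero m hz (by simpa using hs)
  have hd0 : d ≠ 0 := by
    rintro rfl
    rw [zero_smul, ← map_zero τ] at hτ
    exact hz (τ.toRingHom.injective hτ)
  refine h.of_image_of_map_eq_smul τ.toLinearMap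
    (fun i ↦ d ^ i.val * s ^ ((r * i.val) / m)) (fun i ↦ by positivity) (fun i ↦ ?_)
    hr.mul_right_injective.injOn
  rw [AlgHom.toLinearMap_apply, map_pow, hτ, smul_pow, ← pow_mul, pow_eq_smul_pow_val hs, smul_smul]
  push_cast
  simp only [ZMod.natCast_val, ZMod.cast_id', id_eq]

theorem linearIndepOn_of_image_affine (τ : F →ₐ[K] F) (hτ : τ z = d • z ^ r)
    (hr : IsUnit (r : ZMod m)) (e : ℕ) (b : ZMod m) {t : Set (ZMod m)}
    (h : LinearIndepOn K (fun i : ZMod m ↦ z ^ i.val) ((fun i ↦ (r : ZMod m) ^ e * i + b) '' t)) :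
    LinearIndepOn K (fun i : ZMod m ↦ z ^ i.val) t := by
  induction e generalizing t with
  | zero => simpa using linearIndepOn_of_image_add hz hs b (by simpa using h)
  | succ e ih =>
    refine linearIndepOn_of_image_mul hz hs τ hτ hr (ih ?_)
    convert h using 1
    rw [image_image]
    congr! 2 with i
    ring

end CyclicPowers

set_option synthInstance.maxSize 2000 in
theorem ZMod.exists_two_pow_mul_add_mem (i j k : ZMod 7) (hij : i ≠ j) (hik : i ≠ k) (hjk : j ≠ k) :
    ∃ e : Fin 3, ∃ b : ZMod 7,
      ({2 ^ (e : ℕ) * i + b, 2 ^ (e : ℕ) * j + b, 2 ^ (e : ℕ) * k + b} : Finset (ZMod 7)) ∈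
        ({{0, 1, 2}, {0, 1, 3}, {0, 2, 3}} : Finset (Finset (ZMod 7))) := by
  revert i j k
  decide +kernel

section SeventhPowerInBase

variable {K F : Type*} [Field K] [Field F] [Algebra K F] {z : F} {s d : K}
  (hz : LinearIndependent K ![1, z, z ^ 2])
include hz

theorem eq_zero_of_algebraMap_add_mul_add_mul_sq_eq_zero {a b c : K}
    (h : algebraMap K F a + algebraMap K F b * z + algebraMap K F c * z ^ 2 = 0) :
    a = 0 ∧ b = 0 ∧ c = 0 := by
  have := Fintype.linearIndependent_iff.mp hz ![a, b, c]
    (by simpa [Fin.sum_univ_three, Algebra.smul_def] using h)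
  exact ⟨this 0, this 1, this 2⟩

theorem linearIndepOn_zero_one_two :
    LinearIndepOn K (fun i : ZMod 7 ↦ z ^ i.val) {0, 1, 2} :=
  (linearIndepOn_triple_iff (by decide) (by decide) (by decide)).mpr
    (by simpa [show (1 : ZMod 7).val = 1 from rfl, show (2 : ZMod 7).val = 2 from rfl] using hz)

variable (hs : z ^ 7 = algebraMap K F s) (h2 : (2 : K) ≠ 0)
include hs h2

theorem pow_three_notMem_span_one_self : z ^ 3 ∉ Submodule.span K {1, z} := by
  intro h
  obtain ⟨a, b, hab⟩ := Submodule.mem_span_pair.mp h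
  rw [Algebra.smul_def, Algebra.smul_def, mul_one] at hab
  obtain ⟨-, e1, e2⟩ := eq_zero_of_algebraMap_add_mul_add_mul_sq_eq_zero hz
    (a := a * b ^ 2 - s) (b := a ^ 2 + b ^ 3) (c := 2 * a * b) (by
      simp only [map_sub, map_add, map_mul, map_pow, map_ofNat]
      linear_combination (z ^ 4 + algebraMap K F b * z ^ 2 + algebraMap K F a * z
        + algebraMap K F b ^ 2) * hab + hs)
  have hab0 : a * b = 0 := by simpa [mul_assoc, h2] using e2
  obtain ⟨rfl, rfl⟩ : a = 0 ∧ b = 0 := by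
    rcases mul_eq_zero.mp hab0 with rfl | rfl <;> simp_all
  exact hz.ne_zero 1 (by simpa using hab.symm)

theorem pow_three_notMem_span_one_sq : z ^ 3 ∉ Submodule.span K {1, z ^ 2} := by
  intro h
  obtain ⟨a, b, hab⟩ := Submodule.mem_span_pair.mp h
  rw [Algebra.smul_def, Algebra.smul_def, mul_one] at hab
  obtain ⟨-, e1, e2⟩ := eq_zero_of_algebraMap_add_mul_add_mul_sq_eq_zero hz
    (a := 2 * a ^ 2 * b + a * b ^ 4 - s) (b := a ^ 2 + a * b ^ 3) (c := 3 * a * b ^ 2 + b ^ 5) (by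
      simp only [map_sub, map_add, map_mul, map_pow, map_ofNat]
      linear_combination (z ^ 4 + algebraMap K F b * z ^ 3 + algebraMap K F b ^ 2 * z ^ 2
        + (algebraMap K F a + algebraMap K F b ^ 3) * z + 2 * algebraMap K F a * algebraMap K F b
        + algebraMap K F b ^ 4) * hab + hs)
  have hab0 : a * b = 0 := by
    have : 2 * (a * b) ^ 2 = 0 := by linear_combination a * e2 - b ^ 2 * e1
    simpa [h2] using this
  obtain ⟨rfl, rfl⟩ : a = 0 ∧ b = 0 := by
    rcases mul_eq_zero.mp hab0 with rfl | rfl <;> simp_all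
  exact hz.ne_zero 1 (by simpa using hab.symm)

theorem linearIndepOn_zero_one_three :
    LinearIndepOn K (fun i : ZMod 7 ↦ z ^ i.val) {0, 1, 3} := by
  rw [show ({0, 1, 3} : Set (ZMod 7)) = insert 3 {0, 1} by
      ext; simp only [mem_insert_iff, mem_singleton_iff]; tauto,
    linearIndepOn_insert (by simp only [mem_insert_iff, mem_singleton_iff]; decide)]
  refine ⟨(linearIndepOn_zero_one_two hz).mono (by simp [insert_subset_insert]), ?_⟩
  simpa [image_pair, show (3 : ZMod 7).val = 3 from rfl, show (1 : ZMod 7).val = 1 from rfl]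
    using pow_three_notMem_span_one_self hz hs h2

theorem linearIndepOn_zero_two_three :
    LinearIndepOn K (fun i : ZMod 7 ↦ z ^ i.val) {0, 2, 3} := by
  rw [show ({0, 2, 3} : Set (ZMod 7)) = insert 3 {0, 2} by
      ext; simp only [mem_insert_iff, mem_singleton_iff]; tauto,
    linearIndepOn_insert (by simp only [mem_insert_iff, mem_singleton_iff]; decide)]
  refine ⟨(linearIndepOn_zero_one_two hz).mono (by simp [insert_subset_insert]), ?_⟩
  simpa [image_pair, show (3 : ZMod 7).val = 3 from rfl, show (2 : ZMod 7).val = 2 from rfl]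
    using pow_three_notMem_span_one_sq hz hs h2

theorem linearIndepOn_pow_val_of_ne (τ : F →ₐ[K] F) (hτ : τ z = d • z ^ 2) {i j k : ZMod 7}
    (hij : i ≠ j) (hik : i ≠ k) (hjk : j ≠ k) :
    LinearIndepOn K (fun i : ZMod 7 ↦ z ^ i.val) {i, j, k} := by
  obtain ⟨e, b, hb⟩ := ZMod.exists_two_pow_mul_add_mem i j k hij hik hjk
  refine linearIndepOn_of_image_affine (by simpa using hz.ne_zero 1) hs τ hτ
    ((ZMod.isUnit_iff_coprime 2 7).mpr (by norm_num)) e b ?_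
  simp only [Finset.mem_insert, Finset.mem_singleton, ← Finset.coe_inj, Finset.coe_insert,
    Finset.coe_singleton] at hb
  rw [image_insert_eq, image_insert_eq, image_singleton]
  push_cast
  rcases hb with hb | hb | hb <;> rw [hb]
  · exact linearIndepOn_zero_one_two hz
  · exact linearIndepOn_zero_one_three hz hs h2
  · exact linearIndepOn_zero_two_three hz hs h2

theorem linearIndependent_pow_of_lt_seven (τ : F →ₐ[K] F) (hτ : τ z = d • z ^ 2) {j₁ j₂ j₃ : ℕ}
    (h₁ : j₁ < 7) (h₂ : j₂ < 7) (h₃ : j₃ < 7) (h₁₂ : j₁ ≠ j₂) (h₁₃ : j₁ ≠ j₃) (h₂₃ : j₂ ≠ j₃) :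
    LinearIndependent K ![z ^ j₁, z ^ j₂, z ^ j₃] := by
  have hcast : ∀ {a b : ℕ}, a < 7 → b < 7 → a ≠ b → (a : ZMod 7) ≠ b := fun ha hb hab h ↦
    hab (by simpa [ZMod.val_cast_of_lt ha, ZMod.val_cast_of_lt hb] using congrArg ZMod.val h)
  have := linearIndepOn_pow_val_of_ne hz hs h2 τ hτ (hcast h₁ h₂ h₁₂) (hcast h₁ h₃ h₁₃)
    (hcast h₂ h₃ h₂₃)
  rwa [linearIndepOn_triple_iff (hcast h₁ h₂ h₁₂) (hcast h₁ h₃ h₁₃) (hcast h₂ h₃ h₂₃),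
    ZMod.val_cast_of_lt h₁, ZMod.val_cast_of_lt h₂, ZMod.val_cast_of_lt h₃] at this

end SeventhPowerInBase

theorem two_ne_zero_of_odd_card {K : Type*} [Field K] [Fintype K] (h : Odd (Fintype.card K)) :
    (2 : K) ≠ 0 :=
  Ring.two_ne_zero fun h2 ↦ by
    have := FiniteField.even_card_iff_char_two.mp h2
    rw [Nat.odd_iff] at h
    omega

theorem orderOf_eq_card_sub_one_of_forall_exists_pow_eq {F : Type*} [Field F] [Fintype F] {ω : F}
    (hω0 : ω ≠ 0) (hω : ∀ x : F, x ≠ 0 → ∃ k : ℕ, ω ^ k = x) :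
    orderOf ω = Fintype.card F - 1 := by
  classical
  have hgen : ∀ u : Fˣ, u ∈ Subgroup.zpowers (Units.mk0 ω hω0) := fun u ↦ by
    obtain ⟨k, hk⟩ := hω u u.ne_zero
    exact ⟨k, Units.ext (by simp [hk])⟩
  rw [← Units.val_mk0 hω0, orderOf_units, orderOf_eq_card_of_forall_mem_zpowers hgen,
    Nat.card_eq_fintype_card, Fintype.card_units]

theorem pow_notMem_range_algebraMap {K F : Type*} [Field K] [Field F] [Fintype K] [Fintype F]
    [Algebra K F] {ω : F} (hω : orderOf ω = Fintype.card F - 1) {M : ℕ} (hM0 : 0 < M)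
    (hM : M * (Fintype.card K - 1) < Fintype.card F - 1) : ω ^ M ∉ (algebraMap K F).range := by
  rintro ⟨c, hc⟩
  have hc0 : c ≠ 0 := by
    rintro rfl
    have hω0 : ω = 0 := pow_eq_zero_iff hM0.ne' |>.mp (by simpa using hc.symm)
    rw [hω0, orderOf_zero] at hω
    exact (Nat.sub_pos_of_lt Fintype.one_lt_card).ne hω
  have hK : 0 < Fintype.card K - 1 := Nat.sub_pos_of_lt Fintype.one_lt_card
  have : ω ^ (M * (Fintype.card K - 1)) = 1 := by
    rw [pow_mul, ← hc, ← map_pow, FiniteField.pow_card_sub_one_eq_one c hc0, map_one]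
  exact hM.not_ge (Nat.le_of_dvd (Nat.mul_pos hM0 hK) (hω ▸ orderOf_dvd_of_pow_eq_one this))

theorem natDegree_minpoly_eq_finrank {K F : Type*} [Field K] [Field F] [Algebra K F]
    [FiniteDimensional K F] (hF : (Module.finrank K F).Prime) {z : F}
    (hz : z ∉ (algebraMap K F).range) : (minpoly K z).natDegree = Module.finrank K F := by
  have hint : IsIntegral K z := .of_finite K z
  refine ((Nat.dvd_prime hF).mp (minpoly.degree_dvd hint)).resolve_left fun h ↦ ?_
  exact hz (minpoly.natDegree_eq_one_iff.mp h)

theorem linearIndependent_one_self_sq {K F : Type*} [Field K] [Field F] [Algebra K F] {z : F}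
    (h : 3 ≤ (minpoly K z).natDegree) : LinearIndependent K ![1, z, z ^ 2] := by
  convert (linearIndependent_pow (K := K) z).comp (Fin.castLE h) (Fin.castLE_injective h) using 1
  ext i
  fin_cases i <;> simp

theorem exists_algHom_apply_eq_smul_sq {K F : Type*} [Field K] [Field F] [Fintype K]
    [Algebra K F] (hq7 : Fintype.card K % 7 = 2 ∨ Fintype.card K % 7 = 4) {z : F} {s : K}
    (hs : z ^ 7 = algebraMap K F s) : ∃ (τ : F →ₐ[K] F) (d : K), τ z = d • z ^ 2 := by
  obtain ⟨e, he⟩ : ∃ e, Fintype.card K ^ e % 7 = 2 := by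
    rcases hq7 with h | h
    · exact ⟨1, by rw [pow_one, h]⟩
    · exact ⟨2, by rw [Nat.pow_mod, h]⟩
  refine ⟨FiniteField.frobeniusAlgHom K F ^ e, s ^ (Fintype.card K ^ e / 7), ?_⟩
  rw [AlgHom.coe_pow, FiniteField.coe_frobeniusAlgHom, pow_iterate]
  dsimp only
  rw [pow_eq_smul_pow_val hs (Fintype.card K ^ e), ← ZMod.natCast_mod, he]
  rfl

theorem seven_dvd_sq_add_add_one {q : ℕ} (hq7 : q % 7 = 2 ∨ q % 7 = 4) : 7 ∣ q ^ 2 + q + 1 := by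
  rcases hq7 with h | h <;> simp [Nat.dvd_iff_mod_eq_zero, Nat.add_mod, Nat.pow_mod, h]


theorem Nat.pow_three_sub_one (q : ℕ) : q ^ 3 - 1 = (q - 1) * (q ^ 2 + q + 1) := by
  rcases q with _ | t
  · rfl
  · rw [Nat.add_sub_cancel]
    exact Nat.sub_eq_of_eq_add (by ring)

theorem finrank_eq_of_card_eq_pow {K F : Type*} [Field K] [Field F] [Fintype K] [Fintype F]
    [Algebra K F] {n : ℕ} (h : Fintype.card F = Fintype.card K ^ n) : Module.finrank K F = n :=
  Nat.pow_right_injective Fintype.one_lt_card (Module.card_eq_pow_finrank.symm.trans h)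

theorem stmt7_general (q N : ℕ) (hodd : Odd q) (hq7 : q % 7 = 2 ∨ q % 7 = 4) (hN : N = (q ^ 2 + q + 1) / 7)
    (K F : Type) [Field K] [Field F] [Fintype K] [Fintype F] [Algebra K F]
    (hK : Fintype.card K = q) (hF : Fintype.card F = q ^ 3)
    (ω : F) (hω : ∀ x : F, x ≠ 0 → ∃ k : ℕ, ω ^ k = x) :
    ∀ j₁ j₂ j₃ : ℕ, j₁ < 7 → j₂ < 7 → j₃ < 7 → j₁ ≠ j₂ → j₁ ≠ j₃ → j₂ ≠ j₃ →
      LinearIndependent K ![ω ^ (j₁ * N), ω ^ (j₂ * N), ω ^ (j₃ * N)] := by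
  intro j₁ j₂ j₃ h₁ h₂ h₃ h₁₂ h₁₃ h₂₃
  subst hK
  have hq : 1 < Fintype.card K := Fintype.one_lt_card
  have h7N : 7 * N = Fintype.card K ^ 2 + Fintype.card K + 1 := by
    rw [hN, Nat.mul_div_cancel' (seven_dvd_sq_add_add_one hq7)]
  have hcard : Fintype.card F - 1 = (Fintype.card K - 1) * (7 * N) := by
    rw [hF, h7N, Nat.pow_three_sub_one]
  have h2 : (2 : K) ≠ 0 := two_ne_zero_of_odd_card hodd
  have h2F : (2 : F) ≠ 0 := by
    rw [← map_ofNat (algebraMap K F) 2]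
    exact (map_ne_zero _).mpr h2
  have hω0 : ω ≠ 0 := by
    rintro rfl
    obtain ⟨_ | k, hk⟩ := hω 2 h2F
    · exact one_ne_zero (by linear_combination -hk)
    · exact h2F (by simpa using hk.symm)
  have hs : (ω ^ N) ^ 7 = algebraMap K F (Algebra.norm K ω) := by
    rw [FiniteField.algebraMap_norm_eq_pow, Nat.card_eq_fintype_card, Nat.card_eq_fintype_card,
      hcard, Nat.mul_div_cancel_left _ (by omega), ← pow_mul, mul_comm]
  have hzK : ω ^ N ∉ (algebraMap K F).range :=
    pow_notMem_range_algebraMap (orderOf_eq_card_sub_one_of_forall_exists_pow_eq hω0 hω) (by omega)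
      (by rw [hcard, mul_comm]; exact (Nat.mul_lt_mul_left (by omega)).mpr (by omega))
  obtain ⟨τ, d, hτ⟩ := exists_algHom_apply_eq_smul_sq hq7 hs
  have hrank : Module.finrank K F = 3 := finrank_eq_of_card_eq_pow hF
  have hbasis : LinearIndependent K ![1, ω ^ N, (ω ^ N) ^ 2] := linearIndependent_one_self_sq
    ((natDegree_minpoly_eq_finrank (hrank ▸ Nat.prime_three) hzK).trans hrank).ge
  simpa only [← pow_mul, mul_comm] using
    linearIndependent_pow_of_lt_seven hbasis hs h2 τ hτ h₁ h₂ h₃ h₁₂ h₁₃ h₂₃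

/-- Let `q` be an odd prime power with `q ≡ 2` or `4 (mod 7)`,
`ω` a primitive element of `F_{q³}` and `N = (q²+q+1)/7`. Then for all distinct
`j₁, j₂, j₃ ∈ {0,…,6}`, the elements `ω^{j₁N}, ω^{j₂N}, ω^{j₃N}` of `F_{q³}` are
linearly independent over `F_q`. -/
theorem stmt7 (p n q N : ℕ) [Fact p.Prime] (hq : q = p ^ n) (hn : 0 < n)
    (hodd : Odd q) (hq7 : q % 7 = 2 ∨ q % 7 = 4) (hN : N = (q ^ 2 + q + 1) / 7)
    (K F : Type) [Field K] [Field F] [Fintype K] [Fintype F] [Algebra K F]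
    (hK : Fintype.card K = q) (hF : Fintype.card F = q ^ 3)
    (ω : F) (hω : ∀ x : F, x ≠ 0 → ∃ k : ℕ, ω ^ k = x) :
    ∀ j₁ j₂ j₃ : ℕ, j₁ < 7 → j₂ < 7 → j₃ < 7 → j₁ ≠ j₂ → j₁ ≠ j₃ → j₂ ≠ j₃ →
      LinearIndependent K ![ω ^ (j₁ * N), ω ^ (j₂ * N), ω ^ (j₃ * N)] :=
  stmt7_general q N hodd hq7 hN K F hK hF ω hω
end

section
/- Let q be an odd prime power, M a positive integer dividing q²+q+1, N = (q²+q+1)/M, and assume the Gauss periods ψ_{F_{q³}}(C_i^{(N,q³)}) take exactly the three values −M+2q, −M+q, −M with value sets I_1, I_2, I_3. Let u ∈ W_Q with u mod N ∈ 2^{-1}I_1, let ℓ_u be the unique element of {1,…,M−1} with u+ℓ_u·N ∈ W_Q (mod q²+q+1), and set g_M(ω^u) := Tr_{q³/q}(ω^{2u+ℓ_u N})·ω^{ℓ_u N}. Then η(g_M(ω^u)) = η(−1)·η(1−ω^{ℓ_u(q+1)(q³−1)/M})·η(1−ω^{2ℓ_u q(q³−1)/M}), where η is the quadratic character of F_{q³}.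 -/
open scoped Classical Pointwise

/-- `W_Q := {i mod q²+q+1 : Tr_{q³/q}(ω^{2i}) = 0}`. -/
def WQ (q : ℕ) (K : Type) {F : Type} [Field K] [Field F] [Algebra K F] (ω : F) :
    Set (ZMod (q ^ 2 + q + 1)) :=
  {i | Algebra.trace K F (ω ^ (2 * i.val)) = 0}

/-!
Write `A = ω^{2u}`, `b = ω^{ℓN}` and `z = b^{q-1} = ω^{ℓ(q³-1)/M}`, so that `b^q = b z`.
Over `F_q` the trace is `x + x^q + x^{q²}`, and since `ω^{q²+q+1}` lies in `F_q`, the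
hypotheses `u, u + ℓN ∈ W_Q` say `Tr(A) = Tr(A b²) = 0`. These two linear relations between
`A, A^q, A^{q²}` force `Tr(A b) · b · z(z^q + 1) = A b² (1 - z^{q+1})(z - 1)`. Now apply `η`:
`A` and `z` are squares (`q - 1` is even), `1 - z^q = (1 - z)^q` has the same character as
`1 - z` because `q` is odd, and `z^{2q} ≠ 1` because `M` is prime to `2q` and does not divide `ℓ`.
-/

theorem Nat.sq_add_self_add_one_mul_sub_one (q : ℕ) : (q ^ 2 + q + 1) * (q - 1) = q ^ 3 - 1 := by
  rcases q with _ | r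
  · rfl
  · rw [show (r + 1) ^ 3 = (r ^ 2 + 3 * r + 3) * r + 1 by ring, Nat.add_sub_cancel,
      Nat.add_sub_cancel]
    ring

theorem Nat.pow_three_sub_one_div_eq {q M : ℕ} (h : M ∣ q ^ 2 + q + 1) :
    (q ^ 3 - 1) / M = (q ^ 2 + q + 1) / M * (q - 1) := by
  rw [Nat.div_mul_right_comm h, Nat.sq_add_self_add_one_mul_sub_one]

theorem Nat.coprime_two_mul_of_dvd_sq_add_self_add_one {M q : ℕ} (h : M ∣ q ^ 2 + q + 1) :
    M.Coprime (2 * q) := by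
  refine Nat.Coprime.coprime_dvd_left h (Nat.coprime_mul_iff_right.mpr ⟨?_, ?_⟩)
  · rw [Nat.coprime_two_right, show q ^ 2 + q + 1 = q * (q + 1) + 1 by ring]
    exact (Nat.even_mul_succ_self q).add_one
  · rw [show q ^ 2 + q + 1 = 1 + q * (q + 1) by ring, Nat.coprime_add_mul_left_left]
    exact Nat.coprime_one_left q

section Monoid

variable {G : Type*} [Monoid G]

theorem orderOf_pow_pow_three_sub_one_div {x : G} {q M : ℕ} (hx : orderOf x = q ^ 3 - 1)
    (hq : 2 ≤ q) (h : M ∣ q ^ 2 + q + 1) : orderOf (x ^ ((q ^ 3 - 1) / M)) = M := by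
  have hx0 : orderOf x ≠ 0 := hx ▸ Nat.sub_ne_zero_of_lt (Nat.one_lt_pow three_ne_zero hq)
  rw [← hx]
  exact orderOf_pow_orderOf_div hx0
    (hx ▸ Nat.sq_add_self_add_one_mul_sub_one q ▸ h.mul_right (q - 1))

theorem pow_pow_eq_mul_pow_pow_three_sub_one_div (x : G) {q M : ℕ} (hq : 1 ≤ q)
    (h : M ∣ q ^ 2 + q + 1) (ℓ : ℕ) :
    (x ^ (ℓ * ((q ^ 2 + q + 1) / M))) ^ q
      = x ^ (ℓ * ((q ^ 2 + q + 1) / M)) * (x ^ ((q ^ 3 - 1) / M)) ^ ℓ := by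
  rw [Nat.pow_three_sub_one_div_eq h, ← pow_mul, ← pow_mul, ← pow_add]
  congr 1
  zify [hq]
  ring

theorem pow_mul_ne_one_of_coprime {ζ : G} {ℓ k : ℕ}
    (hk : (orderOf ζ).Coprime k) (hℓ0 : 0 < ℓ) (hℓ : ℓ < orderOf ζ) : ζ ^ (ℓ * k) ≠ 1 := by
  rw [Ne, ← orderOf_dvd_iff_pow_eq_one]
  exact fun h => Nat.not_dvd_of_pos_of_lt hℓ0 hℓ (hk.dvd_of_dvd_mul_right h)

end Monoid

theorem trace_mul_identity {R : Type*} [CommRing R] (q : ℕ) {A b z : R} (hb : b ^ q = b * z)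
    (h₁ : A + A ^ q + A ^ (q ^ 2) = 0)
    (h₂ : A * b ^ 2 + (A * b ^ 2) ^ q + (A * b ^ 2) ^ (q ^ 2) = 0) :
    (A * b + (A * b) ^ q + (A * b) ^ (q ^ 2)) * b * (z * (z ^ q + 1))
      = A * b ^ 2 * (1 - z * z ^ q) * (z - 1) := by
  have hb' : b ^ (q ^ 2) = b * z * z ^ q := by rw [sq, pow_mul, hb, mul_pow, hb]
  rw [mul_pow, mul_pow, pow_right_comm b 2, pow_right_comm b 2, hb, hb'] at h₂
  rw [mul_pow, mul_pow, hb, hb']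
  linear_combination b ^ 2 * z ^ 2 * z ^ q * h₁ + h₂

namespace MulChar.IsQuadratic

variable {F : Type*} [Field F] {η : MulChar F ℂ}

theorem apply_sq_eq_one (hη : η.IsQuadratic) {x : F} (hx : x ≠ 0) : η x ^ 2 = 1 := by
  rw [← η.pow_apply' two_ne_zero, hη.sq_eq_one, MulChar.one_apply hx.isUnit]

theorem apply_pow_odd (hη : η.IsQuadratic) {n : ℕ} (hn : Odd n) (x : F) : η (x ^ n) = η x := by
  rw [map_pow, ← η.pow_apply' hn.pos.ne', hη.pow_odd hn]

theorem apply_pow_even (hη : η.IsQuadratic) {n : ℕ} (hn : Even n) {x : F} (hx : x ≠ 0) :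
    η (x ^ n) = 1 := by
  obtain ⟨k, rfl⟩ := hn
  rw [← two_mul, pow_mul, map_pow, map_pow, hη.apply_sq_eq_one hx, one_pow]

theorem apply_eq_of_trace_mul_identity (hη : η.IsQuadratic) {t A b z w : F}
    (h : t * b * (z * (w + 1)) = A * b ^ 2 * (1 - z * w) * (z - 1))
    (hA : η A = 1) (hz : η z = 1) (hb : b ≠ 0) (hw : w ^ 2 ≠ 1)
    (hzw : η (1 - w) = η (1 - z)) :
    η (t * b) = η (-1) * η (1 - z * w) * η (1 - w ^ 2) := by
  have hw1 : w + 1 ≠ 0 := fun h0 => hw (by linear_combination (w - 1) * h0)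
  rw [show z - 1 = -1 * (1 - z) by ring] at h
  have h' := congrArg η h
  simp only [map_mul, map_pow, hA, hz, hη.apply_sq_eq_one hb] at h'
  rw [show (1 : F) - w ^ 2 = (w + 1) * (1 - w) by ring, map_mul, map_mul, hzw]
  linear_combination η (w + 1) * h' - η t * η b * hη.apply_sq_eq_one hw1

end MulChar.IsQuadratic

section Generator

variable {F : Type*} [Field F] {ω : F}

theorem ne_zero_of_forall_pow_eq [Fintype F] (hω : ∀ x : F, x ≠ 0 → ∃ k : ℕ, ω ^ k = x)
    (hF : Odd (Fintype.card F)) : ω ≠ 0 := by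
  have hchar : ringChar F ≠ 2 := by
    have := Nat.odd_iff.mp hF
    rw [Ne, FiniteField.even_card_iff_char_two]
    omega
  rintro rfl
  obtain ⟨k, hk⟩ := hω (-1) (neg_ne_zero.mpr one_ne_zero)
  rcases k with _ | k
  · exact hchar (neg_one_eq_one_iff.mp (hk.symm.trans (pow_zero 0)))
  · exact neg_ne_zero.mpr one_ne_zero (hk.symm.trans (zero_pow k.succ_ne_zero))

theorem orderOf_eq_card_sub_one_of_forall_pow_eq [Fintype F]
    (hω : ∀ x : F, x ≠ 0 → ∃ k : ℕ, ω ^ k = x) (hω0 : ω ≠ 0) :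
    orderOf ω = Fintype.card F - 1 := by
  rw [← Units.val_mk0 hω0, orderOf_units, ← Fintype.card_units, ← Nat.card_eq_fintype_card]
  refine orderOf_eq_card_of_forall_mem_zpowers fun x => ?_
  obtain ⟨k, hk⟩ := hω x x.ne_zero
  exact ⟨k, Units.ext (by simpa using hk)⟩

end Generator

section CubicExtension

variable {K F : Type} [Field K] [Field F] [Fintype K] [Fintype F] [Algebra K F] {q : ℕ}

theorem finrank_eq_three_of_card (hK : Fintype.card K = q) (hF : Fintype.card F = q ^ 3) :
    Module.finrank K F = 3 := by
  have hq : 2 ≤ q := hK ▸ Fintype.one_lt_card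
  have h := Module.card_eq_pow_finrank (K := K) (V := F)
  rw [hK, hF] at h
  exact Nat.pow_right_injective hq h.symm

theorem algebraMap_trace_eq_of_card (hK : Fintype.card K = q) (hF : Fintype.card F = q ^ 3)
    (x : F) : algebraMap K F (Algebra.trace K F x) = x + x ^ q + x ^ (q ^ 2) := by
  rw [FiniteField.algebraMap_trace_eq_sum_pow, finrank_eq_three_of_card hK hF,
    Nat.card_eq_fintype_card, hK]
  simp [Finset.sum_range_succ]

theorem trace_mul_eq_zero_iff_of_pow_eq_self (hK : Fintype.card K = q)
    (hF : Fintype.card F = q ^ 3) {c : F} (hc : c ^ q = c) (hc0 : c ≠ 0) (x : F) :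
    Algebra.trace K F (c * x) = 0 ↔ Algebra.trace K F x = 0 := by
  have hc2 : c ^ (q ^ 2) = c := by rw [sq, pow_mul, hc, hc]
  have h : algebraMap K F (Algebra.trace K F (c * x))
      = c * algebraMap K F (Algebra.trace K F x) := by
    rw [algebraMap_trace_eq_of_card hK hF, algebraMap_trace_eq_of_card hK hF, mul_pow, mul_pow,
      hc, hc2]
    ring
  rw [← map_eq_zero_iff _ (algebraMap K F).injective, h, mul_eq_zero, or_iff_right hc0,
    map_eq_zero_iff _ (algebraMap K F).injective]

theorem mem_WQ_iff (hK : Fintype.card K = q) (hF : Fintype.card F = q ^ 3) {ω : F} (hω : ω ≠ 0)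
    {i : ZMod (q ^ 2 + q + 1)} {m : ℕ} (hm : (m : ZMod (q ^ 2 + q + 1)) = i) :
    i ∈ WQ q K ω ↔ Algebra.trace K F (ω ^ (2 * m)) = 0 := by
  subst hm
  have hq : 1 ≤ q := hK ▸ Fintype.card_pos
  have hm' : m = (q ^ 2 + q + 1) * (m / (q ^ 2 + q + 1)) + (m : ZMod (q ^ 2 + q + 1)).val := by
    rw [ZMod.val_natCast, Nat.div_add_mod]
  have hd : (ω ^ (q ^ 2 + q + 1)) ^ q = ω ^ (q ^ 2 + q + 1) := by
    have h1 : (ω ^ (q ^ 2 + q + 1)) ^ (q - 1) = 1 := by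
      rw [← pow_mul, Nat.sq_add_self_add_one_mul_sub_one, ← hF]
      exact FiniteField.pow_card_sub_one_eq_one ω hω
    rw [← pow_sub_one_mul (by omega : q ≠ 0), h1, one_mul]
  set c := (ω ^ (q ^ 2 + q + 1)) ^ (2 * (m / (q ^ 2 + q + 1)))
  have hc : c ^ q = c := by rw [pow_right_comm, hd]
  rw [WQ, Set.mem_ofPred_eq]
  nth_rw 2 [hm']
  rw [mul_add, pow_add, mul_left_comm, pow_mul ω (q ^ 2 + q + 1),
    trace_mul_eq_zero_iff_of_pow_eq_self hK hF hc (pow_ne_zero _ (pow_ne_zero _ hω))]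

theorem quadChar_trace_mul_eq (hK : Fintype.card K = q) (hF : Fintype.card F = q ^ 3)
    (hodd : Odd q) {η : MulChar F ℂ} (hη : η.IsQuadratic) {a b z : F} (ha : a ≠ 0) (hb : b ≠ 0)
    (hbz : b ^ q = b * z) (h₁ : Algebra.trace K F (a ^ 2) = 0)
    (h₂ : Algebra.trace K F (a ^ 2 * b ^ 2) = 0) (hz : (z ^ q) ^ 2 ≠ 1) :
    η (algebraMap K F (Algebra.trace K F (a ^ 2 * b)) * b)
      = η (-1) * η (1 - z * z ^ q) * η (1 - (z ^ q) ^ 2) := by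
  have key := trace_mul_identity q hbz
    (by rw [← algebraMap_trace_eq_of_card hK hF, h₁, map_zero])
    (by rw [← algebraMap_trace_eq_of_card hK hF, h₂, map_zero])
  rw [← algebraMap_trace_eq_of_card hK hF] at key
  have hzb : z = b ^ (q - 1) := by
    rw [← mul_pow_sub_one hodd.pos.ne', mul_right_inj' hb] at hbz
    exact hbz.symm
  have hfrob : (1 - z) ^ q = 1 - z ^ q := by
    simpa [hK] using map_sub (FiniteField.frobeniusAlgHom K F) 1 z
  refine hη.apply_eq_of_trace_mul_identity key (hη.apply_pow_even even_two ha) ?_ hb hz ?_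
  · rw [hzb]
    exact hη.apply_pow_even (Nat.Odd.sub_odd hodd odd_one) hb
  · rw [← hfrob, hη.apply_pow_odd hodd]

end CubicExtension

theorem stmt16_general (q M N : ℕ)
    (hodd : Odd q) (hMdvd : M ∣ q ^ 2 + q + 1)
    (hN : N = (q ^ 2 + q + 1) / M)
    (K F : Type) [Field K] [Field F] [Fintype K] [Fintype F]
    [Algebra K F]
    (hK : Fintype.card K = q) (hF : Fintype.card F = q ^ 3)
    (ω : F) (hω : ∀ x : F, x ≠ 0 → ∃ k : ℕ, ω ^ k = x)
    (u : ZMod (q ^ 2 + q + 1)) (hu : u ∈ WQ q K ω)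
    (ℓu : ℕ) (hℓu1 : 1 ≤ ℓu) (hℓu2 : ℓu ≤ M - 1)
    (hℓuW : u + ((ℓu * N : ℕ) : ZMod (q ^ 2 + q + 1)) ∈ WQ q K ω)
    (η : MulChar F ℂ) (hη : orderOf η = 2) :
    η (algebraMap K F (Algebra.trace K F (ω ^ (2 * u.val + ℓu * N))) * ω ^ (ℓu * N))
      = η (-1) * η (1 - ω ^ (ℓu * (q + 1) * ((q ^ 3 - 1) / M)))
          * η (1 - ω ^ (2 * ℓu * q * ((q ^ 3 - 1) / M))) := by
  have hω0 : ω ≠ 0 := ne_zero_of_forall_pow_eq hω (hF ▸ hodd.pow)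
  have hord : orderOf ω = q ^ 3 - 1 := hF ▸ orderOf_eq_card_sub_one_of_forall_pow_eq hω hω0
  have hζ := orderOf_pow_pow_three_sub_one_div hord (hK ▸ Fintype.one_lt_card) hMdvd
  have hbz := hN ▸ pow_pow_eq_mul_pow_pow_three_sub_one_div ω hodd.pos hMdvd ℓu
  set z := (ω ^ ((q ^ 3 - 1) / M)) ^ ℓu
  rw [pow_add, pow_mul' ω 2,
    show ω ^ (ℓu * (q + 1) * ((q ^ 3 - 1) / M)) = z * z ^ q by
      rw [← pow_succ', ← pow_mul, ← pow_mul]; ring_nf,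
    show ω ^ (2 * ℓu * q * ((q ^ 3 - 1) / M)) = (z ^ q) ^ 2 by
      rw [← pow_mul, ← pow_mul, ← pow_mul]; ring_nf]
  refine quadChar_trace_mul_eq hK hF hodd
    (MulChar.isQuadratic_iff_sq_eq_one.mpr (hη ▸ pow_orderOf_eq_one η)) (pow_ne_zero _ hω0)
    (pow_ne_zero _ hω0) hbz ?_ ?_ ?_
  · rw [← pow_mul, mul_comm]
    exact hu
  · have h := (mem_WQ_iff hK hF hω0 (m := u.val + ℓu * N) (by simp)).mp hℓuW
    rw [← pow_mul, ← pow_mul, ← pow_add]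
    convert h using 3
    ring
  · rw [← pow_mul, ← pow_mul, mul_comm q 2]
    refine pow_mul_ne_one_of_coprime ?_ (by omega) (by omega)
    rw [hζ]
    exact Nat.coprime_two_mul_of_dvd_sq_add_self_add_one hMdvd

/-- Under the three-valued Gauss-period assumption, for `u ∈ W_Q`
with `u mod N ∈ 2⁻¹I₁` and `ℓ_u` the (unique) element of `{1,…,M-1}` with
`u + ℓ_u·N ∈ W_Q`, setting `g_M(ω^u) := Tr_{q³/q}(ω^{2u+ℓ_uN})·ω^{ℓ_uN}` one has
`η(g_M(ω^u)) = η(-1)·η(1-ω^{ℓ_u(q+1)(q³-1)/M})·η(1-ω^{2ℓ_u q(q³-1)/M})`,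
where `η` is the quadratic character of `F_{q³}`. -/
theorem stmt16 (p n q M N : ℕ) [Fact p.Prime] (hq : q = p ^ n) (hn : 0 < n)
    (hodd : Odd q) (hM : 0 < M) (hMdvd : M ∣ q ^ 2 + q + 1)
    (hN : N = (q ^ 2 + q + 1) / M)
    (K F : Type) [Field K] [Field F] [Fintype K] [Fintype F]
    [Algebra K F] [Algebra (ZMod p) F]
    (hK : Fintype.card K = q) (hF : Fintype.card F = q ^ 3)
    (ω : F) (hω : ∀ x : F, x ≠ 0 → ∃ k : ℕ, ω ^ k = x)
    (hthree : {v : ℂ | ∃ i < N, psiSum (canonPsi p F) (cycClass ω N i) = v}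
      = {(-(M : ℂ) + 2 * (q : ℂ)), (-(M : ℂ) + (q : ℂ)), (-(M : ℂ))})
    (I₁ : Set (ZMod N))
    (hI₁ : I₁ = {i : ZMod N |
      psiSum (canonPsi p F) (cycClass ω N i.val) = -(M : ℂ) + 2 * (q : ℂ)})
    (u : ZMod (q ^ 2 + q + 1)) (hu : u ∈ WQ q K ω)
    (huI : ((u.val : ZMod N)) ∈ (2 : ZMod N)⁻¹ • I₁)
    (ℓu : ℕ) (hℓu1 : 1 ≤ ℓu) (hℓu2 : ℓu ≤ M - 1)
    (hℓuW : u + ((ℓu * N : ℕ) : ZMod (q ^ 2 + q + 1)) ∈ WQ q K ω)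
    (η : MulChar F ℂ) (hη : orderOf η = 2) :
    η (algebraMap K F (Algebra.trace K F (ω ^ (2 * u.val + ℓu * N))) * ω ^ (ℓu * N))
      = η (-1) * η (1 - ω ^ (ℓu * (q + 1) * ((q ^ 3 - 1) / M)))
          * η (1 - ω ^ (2 * ℓu * q * ((q ^ 3 - 1) / M))) :=
  stmt16_general q M N hodd hMdvd hN K F hK hF ω hω u hu ℓu hℓu1 hℓu2 hℓuW η hη
end
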